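/- arXiv:1204.2010 — 11 statements merged into one kernel-verified Lean document; each statement's English description precedes it below -/
import Mathlib

section
/- Let A ⊆ ℝ be an open invex set with respect to η : A × A → ℝ, and let a, b ∈ A with a < a + η(b,a). Suppose f : A → ℝ is differentiable and f' is integrable on [a, a + η(b,a)]. Then for all x ∈ [a, a + η(b,a)], f(x) - (1/η(b,a)) ∫_a^{a+η(b,a)} f(u) du = η(b,a) ( ∫_0^{(x-a)/η(b,a)} t f'(a + t η(b,a)) dt + ∫_{(x-a)/η(b,a)}^1 (t-1) f'(a + t η(b,a)) dt ). -/
/-! Parametrise the segment by `g t = f (a + t η(b,a))`: then `g' t = η(b,a) f' (a + t η(b,a))` on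
`[0, 1]`, and the substitution `u = a + t η(b,a)` turns the mean of `f` over `[a, a + η(b,a)]` into
`∫₀¹ g`. The claim is the Montgomery identity for `g` on `[0, 1]` at `s = (x - a) / η(b,a)`,
obtained by integrating `t g' t` over `[0, s]` and `(t - 1) g' t` over `[s, 1]` by parts. -/

open MeasureTheory intervalIntegral Set

theorem montgomery_identity {g g' : ℝ → ℝ} {c d x : ℝ} (hcx : c ≤ x) (hxd : x ≤ d)
    (hg : ∀ t ∈ Icc c d, HasDerivAt g (g' t) t) (hg' : IntervalIntegrable g' volume c d) :
    (d - c) * g x - ∫ t in c..d, g t =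
      (∫ t in c..x, (t - c) * g' t) + ∫ t in x..d, (t - d) * g' t := by
  have hx : x ∈ uIcc c d := by rw [uIcc_of_le (hcx.trans hxd)]; exact ⟨hcx, hxd⟩
  have hleft : uIcc c x ⊆ uIcc c d := uIcc_subset_uIcc left_mem_uIcc hx
  have hright : uIcc x d ⊆ uIcc c d := uIcc_subset_uIcc hx right_mem_uIcc
  have hg_Icc : ∀ t ∈ uIcc c d, HasDerivAt g (g' t) t := by
    rw [uIcc_of_le (hcx.trans hxd)]; exact hg
  have hg_int : IntervalIntegrable g volume c d :=
    ContinuousOn.intervalIntegrable fun t ht => (hg_Icc t ht).continuousAt.continuousWithinAt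
  have hparts_left : ∫ t in c..x, (t - c) * g' t = (x - c) * g x - (c - c) * g c -
      ∫ t in c..x, 1 * g t :=
    integral_mul_deriv_eq_deriv_mul (fun t _ => (hasDerivAt_id t).sub_const c)
      (fun t ht => hg_Icc t (hleft ht)) intervalIntegrable_const (hg'.mono_set hleft)
  have hparts_right : ∫ t in x..d, (t - d) * g' t = (d - d) * g d - (x - d) * g x -
      ∫ t in x..d, 1 * g t :=
    integral_mul_deriv_eq_deriv_mul (fun t _ => (hasDerivAt_id t).sub_const d)
      (fun t ht => hg_Icc t (hright ht)) intervalIntegrable_const (hg'.mono_set hright)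
  rw [hparts_left, hparts_right, ← integral_add_adjacent_intervals (hg_int.mono_set hleft)
    (hg_int.mono_set hright)]
  simp only [one_mul]
  ring

theorem integral_eq_mul_integral_unit_comp (f : ℝ → ℝ) (a h : ℝ) :
    ∫ u in a..a + h, f u = h * ∫ t in (0 : ℝ)..1, f (a + t * h) := by
  simp [mul_comm _ h]

theorem IntervalIntegrable.comp_unit_affine {f : ℝ → ℝ} {a h : ℝ} (hh : h ≠ 0)
    (hf : IntervalIntegrable f volume a (a + h)) :
    IntervalIntegrable (fun t => f (a + t * h)) volume 0 1 := by
  simpa [hh, mul_comm _ h] using (hf.comp_add_left a).comp_mul_left (c := h)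

theorem ostrowski_identity_preinvex_general
    (A : Set ℝ) (η : ℝ → ℝ → ℝ) (a b : ℝ) (f f' : ℝ → ℝ)
    (hinv : ∀ x ∈ A, ∀ y ∈ A, ∀ t ∈ Icc (0:ℝ) 1, x + t * η y x ∈ A)
    (ha : a ∈ A) (hb : b ∈ A) (hab : a < a + η b a)
    (hf : ∀ x ∈ A, HasDerivAt f (f' x) x)
    (hint : IntervalIntegrable f' volume a (a + η b a)) :
    ∀ x ∈ Icc a (a + η b a),
      f x - (1 / η b a) * ∫ u in a..(a + η b a), f u =
        η b a *
          ((∫ t in (0:ℝ)..((x - a) / η b a), t * f' (a + t * η b a)) +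
           ∫ t in ((x - a) / η b a)..(1:ℝ), (t - 1) * f' (a + t * η b a)) := by
  intro x hx
  set h := η b a
  have hh : 0 < h := by linarith
  set s := (x - a) / h
  have hs0 : 0 ≤ s := div_nonneg (by linarith [hx.1]) hh.le
  have hs1 : s ≤ 1 := (div_le_one hh).2 (by linarith [hx.2])
  have hxs : a + s * h = x := by rw [div_mul_cancel₀ _ hh.ne', add_sub_cancel]
  have hderiv : ∀ t ∈ Icc (0 : ℝ) 1,
      HasDerivAt (fun t => f (a + t * h)) (f' (a + t * h) * h) t := fun t ht =>
    (hf _ (hinv a ha b hb t ht)).comp t ((hasDerivAt_mul_const h).const_add a)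
  have key := montgomery_identity hs0 hs1 hderiv ((hint.comp_unit_affine hh.ne').mul_const h)
  simp only [sub_zero, one_mul] at key
  rw [integral_eq_mul_integral_unit_comp, one_div, inv_mul_cancel_left₀ hh.ne', ← hxs, mul_add,
    ← intervalIntegral.integral_const_mul, ← intervalIntegral.integral_const_mul]
  convert key using 2 <;> exact integral_congr fun t _ => by ring

theorem ostrowski_identity_preinvex
    (A : Set ℝ) (η : ℝ → ℝ → ℝ) (a b : ℝ) (f f' : ℝ → ℝ)
    (hA : IsOpen A)
    (hinv : ∀ x ∈ A, ∀ y ∈ A, ∀ t ∈ Icc (0:ℝ) 1, x + t * η y x ∈ A)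
    (ha : a ∈ A) (hb : b ∈ A) (hab : a < a + η b a)
    (hf : ∀ x ∈ A, HasDerivAt f (f' x) x)
    (hint : IntervalIntegrable f' volume a (a + η b a)) :
    ∀ x ∈ Icc a (a + η b a),
      f x - (1 / η b a) * ∫ u in a..(a + η b a), f u =
        η b a *
          ((∫ t in (0:ℝ)..((x - a) / η b a), t * f' (a + t * η b a)) +
           ∫ t in ((x - a) / η b a)..(1:ℝ), (t - 1) * f' (a + t * η b a)) :=
  ostrowski_identity_preinvex_general A η a b f f' hinv ha hb hab hf hint
end

section
/- Let A ⊆ ℝ be an open invex set with respect to η, a, b ∈ A with a < a + η(b,a), f : A → ℝ differentiable with f' integrable on [a, a+η(b,a)], and suppose |f'| is preinvex on A. Then for all x ∈ [a, a+η(b,a)], |f(x) - (1/η(b,a)) ∫_a^{a+η(b,a)} f(u) du| ≤ (η(b,a)/6) { [3((x-a)/η(b,a))² - 2((x-a)/η(b,a))³ + 2((a+η(b,a)-x)/η(b,a))³] |f'(a)| + [1 - 3((x-a)/η(b,a))² + 4((x-a)/η(b,a))³] |f'(b)| }. -/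
/-!
Integrating by parts against the Montgomery kernel, `u - a` on `[a, x]` and `u - (a + η b a)`
on `[x, a + η b a]`, writes `f x` minus the mean of `f` as `1 / η b a` times the integral of
the kernel against `f'`. Preinvexity of `|f'|` along the segment from `a` in direction `η b a`
bounds `|f'|` there by the affine interpolation of `|f' a|` and `|f' b|`, and integrating the
kernel against that affine majorant gives the two cubic coefficients.
-/

open MeasureTheory intervalIntegral Set

lemma exists_add_mul_eq_of_mem_Icc {a d u : ℝ} (hd : 0 ≤ d) (hu : u ∈ Icc a (a + d)) :
    ∃ t ∈ Icc (0 : ℝ) 1, a + t * d = u := by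
  rw [← segment_eq_Icc (by linarith), segment_eq_image'] at hu
  simpa [smul_eq_mul] using hu

lemma abs_integral_mul_le_integral_abs_mul {k f' g : ℝ → ℝ} {c d : ℝ} (hcd : c ≤ d)
    (hk : ContinuousOn k (Icc c d)) (hf' : IntervalIntegrable f' volume c d)
    (hg : IntervalIntegrable g volume c d) (hf'g : ∀ u ∈ Icc c d, |f' u| ≤ g u) :
    |∫ u in c..d, k u * f' u| ≤ ∫ u in c..d, |k u| * g u := by
  have hk' : ContinuousOn k (uIcc c d) := by rwa [uIcc_of_le hcd]
  calc |∫ u in c..d, k u * f' u| ≤ ∫ u in c..d, |k u * f' u| :=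
        abs_integral_le_integral_abs hcd
    _ ≤ ∫ u in c..d, |k u| * g u := by
        refine integral_mono_on hcd (hf'.continuousOn_mul hk').abs
          (hg.continuousOn_mul hk'.abs) fun u hu => ?_
        rw [abs_mul]
        exact mul_le_mul_of_nonneg_left (hf'g u hu) (abs_nonneg _)

section Montgomery

variable {f f' : ℝ → ℝ} {a b x : ℝ}

theorem montgomery_identity_s1 (hax : a ≤ x) (hxb : x ≤ b)
    (hf : ∀ u ∈ Icc a b, HasDerivAt f (f' u) u) (hint : IntervalIntegrable f' volume a b) :
    (b - a) * f x - ∫ u in a..b, f u =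
      (∫ u in a..x, (u - a) * f' u) + ∫ u in x..b, (u - b) * f' u := by
  have hab : a ≤ b := hax.trans hxb
  have hxab : x ∈ uIcc a b := mem_uIcc_of_le hax hxb
  have hf' : ∀ u ∈ uIcc a b, HasDerivAt f (f' u) u := by rwa [uIcc_of_le hab]
  have hfi : IntervalIntegrable f volume a b :=
    ContinuousOn.intervalIntegrable fun u hu => (hf' u hu).continuousAt.continuousWithinAt
  have hparts (c d e : ℝ) (hsub : uIcc c d ⊆ uIcc a b) :
      ∫ u in c..d, (u - e) * f' u = (d - e) * f d - (c - e) * f c - ∫ u in c..d, f u := by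
    simpa using integral_mul_deriv_eq_deriv_mul (u := fun u => u - e) (u' := fun _ => 1)
      (fun u _ => (hasDerivAt_id u).sub_const e) (fun u hu => hf' u (hsub hu))
      intervalIntegrable_const (hint.mono_set hsub)
  rw [hparts a x a (uIcc_subset_uIcc_left hxab), hparts x b b (uIcc_subset_uIcc_right hxab),
    ← integral_add_adjacent_intervals (hfi.mono_set (uIcc_subset_uIcc_left hxab))
      (hfi.mono_set (uIcc_subset_uIcc_right hxab))]
  ring

theorem abs_mul_sub_integral_le_of_abs_deriv_le {g : ℝ → ℝ} (hax : a ≤ x) (hxb : x ≤ b)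
    (hf : ∀ u ∈ Icc a b, HasDerivAt f (f' u) u) (hint : IntervalIntegrable f' volume a b)
    (hf'g : ∀ u ∈ Icc a b, |f' u| ≤ g u) (hg : ContinuousOn g (Icc a b)) :
    |(b - a) * f x - ∫ u in a..b, f u| ≤
      (∫ u in a..x, (u - a) * g u) + ∫ u in x..b, (b - u) * g u := by
  have hxab : x ∈ uIcc a b := mem_uIcc_of_le hax hxb
  have hgi : IntervalIntegrable g volume a b := hg.intervalIntegrable_of_Icc (hax.trans hxb)
  rw [montgomery_identity_s1 hax hxb hf hint]
  refine (abs_add_le _ _).trans (add_le_add ?_ ?_)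
  · calc |∫ u in a..x, (u - a) * f' u| ≤ ∫ u in a..x, |u - a| * g u :=
          abs_integral_mul_le_integral_abs_mul hax (by fun_prop)
            (hint.mono_set (uIcc_subset_uIcc_left hxab))
            (hgi.mono_set (uIcc_subset_uIcc_left hxab))
            fun u hu => hf'g u (Icc_subset_Icc_right hxb hu)
      _ = ∫ u in a..x, (u - a) * g u := integral_congr fun u hu => by
          rw [uIcc_of_le hax] at hu
          rw [abs_of_nonneg (sub_nonneg.2 hu.1)]
  · calc |∫ u in x..b, (u - b) * f' u| ≤ ∫ u in x..b, |u - b| * g u :=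
          abs_integral_mul_le_integral_abs_mul hxb (by fun_prop)
            (hint.mono_set (uIcc_subset_uIcc_right hxab))
            (hgi.mono_set (uIcc_subset_uIcc_right hxab))
            fun u hu => hf'g u (Icc_subset_Icc_left hax hu)
      _ = ∫ u in x..b, (b - u) * g u := integral_congr fun u hu => by
          rw [uIcc_of_le hxb] at hu
          rw [abs_sub_comm, abs_of_nonneg (sub_nonneg.2 hu.2)]

end Montgomery

lemma integral_quadratic (p q r s t : ℝ) :
    ∫ u in s..t, (p * u ^ 2 + q * u + r) =
      p * (t ^ 3 - s ^ 3) / 3 + q * (t ^ 2 - s ^ 2) / 2 + r * (t - s) := by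
  have hderiv (u : ℝ) : HasDerivAt (fun u => p * u ^ 3 / 3 + q * u ^ 2 / 2 + r * u)
      (p * u ^ 2 + q * u + r) u := by
    refine (((((hasDerivAt_pow 3 u).const_mul p).div_const 3).add
      (((hasDerivAt_pow 2 u).const_mul q).div_const 2)).add
      ((hasDerivAt_id u).const_mul r)).congr_deriv ?_
    norm_num
    ring
  rw [integral_eq_sub_of_hasDerivAt (fun u _ => hderiv u)
    ((by fun_prop : Continuous fun u : ℝ => p * u ^ 2 + q * u + r).intervalIntegrable _ _)]
  ring

lemma integral_montgomery_kernel_mul_affine (a x h C D : ℝ) (hh : h ≠ 0) :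
    1 / h * ((∫ u in a..x, (u - a) * ((1 - (u - a) / h) * C + (u - a) / h * D)) +
        ∫ u in x..a + h, (a + h - u) * ((1 - (u - a) / h) * C + (u - a) / h * D)) =
      h / 6 * ((3 * ((x - a) / h) ^ 2 - 2 * ((x - a) / h) ^ 3 + 2 * ((a + h - x) / h) ^ 3) * C +
        (1 - 3 * ((x - a) / h) ^ 2 + 4 * ((x - a) / h) ^ 3) * D) := by
  set E := (D - C) / h
  have hleft : ∫ u in a..x, (u - a) * ((1 - (u - a) / h) * C + (u - a) / h * D) =
      ∫ u in a..x, (E * u ^ 2 + (C - 2 * a * E) * u + (a ^ 2 * E - a * C)) :=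
    integral_congr fun u _ => by simp only [E]; field_simp; ring
  have hright : ∫ u in x..a + h, (a + h - u) * ((1 - (u - a) / h) * C + (u - a) / h * D) =
      ∫ u in x..a + h, (-E * u ^ 2 + ((2 * a + h) * E - C) * u +
        ((a + h) * C - a * (a + h) * E)) :=
    integral_congr fun u _ => by simp only [E]; field_simp; ring
  rw [hleft, hright, integral_quadratic, integral_quadratic]
  simp only [E]
  field_simp
  ring

theorem ostrowski_preinvex_general
    (A : Set ℝ) (η : ℝ → ℝ → ℝ) (a b : ℝ) (f f' : ℝ → ℝ)
    (hinv : ∀ x ∈ A, ∀ y ∈ A, ∀ t ∈ Icc (0:ℝ) 1, x + t * η y x ∈ A)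
    (ha : a ∈ A) (hb : b ∈ A) (hab : a < a + η b a)
    (hf : ∀ x ∈ A, HasDerivAt f (f' x) x)
    (hint : IntervalIntegrable f' volume a (a + η b a))
    (hpre : ∀ x ∈ A, ∀ y ∈ A, ∀ t ∈ Icc (0:ℝ) 1,
      |f' (x + t * η y x)| ≤ (1 - t) * |f' x| + t * |f' y|) :
    ∀ x ∈ Icc a (a + η b a),
      |f x - (1 / η b a) * ∫ u in a..(a + η b a), f u| ≤
        (η b a / 6) *
          ((3 * ((x - a) / η b a) ^ 2 - 2 * ((x - a) / η b a) ^ 3 +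
              2 * ((a + η b a - x) / η b a) ^ 3) * |f' a| +
           (1 - 3 * ((x - a) / η b a) ^ 2 + 4 * ((x - a) / η b a) ^ 3) * |f' b|) := by
  rintro x ⟨hax, hxb⟩
  set h := η b a
  have hh : 0 < h := by linarith
  have hsub : Icc a (a + h) ⊆ A := fun u hu => by
    obtain ⟨t, ht, rfl⟩ := exists_add_mul_eq_of_mem_Icc hh.le hu
    exact hinv a ha b hb t ht
  have hmaj : ∀ u ∈ Icc a (a + h),
      |f' u| ≤ (1 - (u - a) / h) * |f' a| + (u - a) / h * |f' b| := fun u hu => by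
    obtain ⟨t, ht, rfl⟩ := exists_add_mul_eq_of_mem_Icc hh.le hu
    rw [add_sub_cancel_left, mul_div_cancel_right₀ _ hh.ne']
    exact hpre a ha b hb t ht
  have hbound := abs_mul_sub_integral_le_of_abs_deriv_le hax hxb (fun u hu => hf u (hsub hu))
    hint hmaj (by fun_prop)
  rw [add_sub_cancel_left] at hbound
  calc |f x - 1 / h * ∫ u in a..a + h, f u| = |1 / h * (h * f x - ∫ u in a..a + h, f u)| := by
        rw [mul_sub, ← mul_assoc, one_div_mul_cancel hh.ne', one_mul]
    _ = 1 / h * |h * f x - ∫ u in a..a + h, f u| := by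
        rw [abs_mul, abs_of_pos (one_div_pos.2 hh)]
    _ ≤ _ := by gcongr
    _ = _ := integral_montgomery_kernel_mul_affine a x h _ _ hh.ne'

theorem ostrowski_preinvex
    (A : Set ℝ) (η : ℝ → ℝ → ℝ) (a b : ℝ) (f f' : ℝ → ℝ)
    (hA : IsOpen A)
    (hinv : ∀ x ∈ A, ∀ y ∈ A, ∀ t ∈ Icc (0:ℝ) 1, x + t * η y x ∈ A)
    (ha : a ∈ A) (hb : b ∈ A) (hab : a < a + η b a)
    (hf : ∀ x ∈ A, HasDerivAt f (f' x) x)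
    (hint : IntervalIntegrable f' volume a (a + η b a))
    (hpre : ∀ x ∈ A, ∀ y ∈ A, ∀ t ∈ Icc (0:ℝ) 1,
      |f' (x + t * η y x)| ≤ (1 - t) * |f' x| + t * |f' y|) :
    ∀ x ∈ Icc a (a + η b a),
      |f x - (1 / η b a) * ∫ u in a..(a + η b a), f u| ≤
        (η b a / 6) *
          ((3 * ((x - a) / η b a) ^ 2 - 2 * ((x - a) / η b a) ^ 3 +
              2 * ((a + η b a - x) / η b a) ^ 3) * |f' a| +
           (1 - 3 * ((x - a) / η b a) ^ 2 + 4 * ((x - a) / η b a) ^ 3) * |f' b|) :=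
  ostrowski_preinvex_general A η a b f f' hinv ha hb hab hf hint hpre
end

section
/- The constant 1/6 in the preinvex Ostrowski inequality is best possible: if K > 0 is a constant such that for every differentiable f on an open invex A ⊆ ℝ with |f'| preinvex and f' integrable, and every x ∈ [a, a+η(b,a)], |f(x) - (1/η(b,a)) ∫_a^{a+η(b,a)} f(u) du| ≤ K·η(b,a){[3((x-a)/η(b,a))² - 2((x-a)/η(b,a))³ + 2((a+η(b,a)-x)/η(b,a))³]|f'(a)| + [1 - 3((x-a)/η(b,a))² + 4((x-a)/η(b,a))³]|f'(b)|}, then K ≥ 1/6. -/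
open MeasureTheory intervalIntegral Set

theorem ostrowski_preinvex_sharp (K : ℝ) (hK : 0 < K)
    (h : ∀ (A : Set ℝ) (η : ℝ → ℝ → ℝ) (a b : ℝ) (f f' : ℝ → ℝ),
      IsOpen A →
      (∀ x ∈ A, ∀ y ∈ A, ∀ t ∈ Icc (0:ℝ) 1, x + t * η y x ∈ A) →
      a ∈ A → b ∈ A → a < a + η b a →
      (∀ x ∈ A, HasDerivAt f (f' x) x) →
      IntervalIntegrable f' volume a (a + η b a) →
      (∀ x ∈ A, ∀ y ∈ A, ∀ t ∈ Icc (0:ℝ) 1,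
        |f' (x + t * η y x)| ≤ (1 - t) * |f' x| + t * |f' y|) →
      ∀ x ∈ Icc a (a + η b a),
        |f x - (1 / η b a) * ∫ u in a..(a + η b a), f u| ≤
          K * η b a *
            ((3 * ((x - a) / η b a) ^ 2 - 2 * ((x - a) / η b a) ^ 3 +
                2 * ((a + η b a - x) / η b a) ^ 3) * |f' a| +
             (1 - 3 * ((x - a) / η b a) ^ 2 + 4 * ((x - a) / η b a) ^ 3) * |f' b|)) :
    K ≥ 1 / 6 := by
  have key := h Set.univ (fun y x => y - x) 0 1 (fun x => x) (fun _ => 1)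
    isOpen_univ (fun _ _ _ _ _ _ => trivial) trivial trivial (by norm_num)
    (fun x _ => hasDerivAt_id x) (intervalIntegrable_const)
    (fun x _ y _ t ht => by
      simp only [abs_one]
      linarith)
    1 (by norm_num)
  have hint : (∫ u in (0:ℝ)..(0 + (1 - 0)), (fun x => x) u) = 1/2 := by
    norm_num [integral_id]
  rw [hint] at key
  norm_num [abs_of_nonneg] at key
  linarith
end

section
/- Let f : [a,b] → ℝ be differentiable on an open interval containing [a,b] with a < b, and suppose |f'(x)| ≤ M for all x ∈ [a,b], with |f'| convex on [a,b]. Then |f((a+b)/2) - (1/(b-a)) ∫_a^b f(u) du| ≤ M(b-a)/4. -/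
/-!
For `u ∈ [a, b]` the mean value inequality gives `|f m - f u| ≤ M |m - u|` at the midpoint `m`,
so `|f m - ⨍ f| ≤ M/(b - a) · ∫_a^b |m - u| du = M/(b - a) · (b - a)²/4`.
-/

open MeasureTheory intervalIntegral Set

theorem integral_abs_sub_eq {a b x : ℝ} (hax : a ≤ x) (hxb : x ≤ b) :
    ∫ u in a..b, |x - u| = ((x - a) ^ 2 + (b - x) ^ 2) / 2 := by
  have hint : ∀ p q : ℝ, IntervalIntegrable (fun u => |x - u|) volume p q :=
    fun p q => (by fun_prop : Continuous fun u => |x - u|).intervalIntegrable p q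
  have hleft : ∫ u in a..x, |x - u| = ∫ u in a..x, (x - u) :=
    integral_congr fun u hu => by
      rw [uIcc_of_le hax] at hu
      exact abs_of_nonneg (sub_nonneg.2 hu.2)
  have hright : ∫ u in x..b, |x - u| = ∫ u in x..b, (u - x) :=
    integral_congr fun u hu => by
      rw [uIcc_of_le hxb] at hu
      exact abs_of_nonpos (sub_nonpos.2 hu.1) |>.trans (neg_sub x u)
  rw [← integral_add_adjacent_intervals (hint a x) (hint x b), hleft, hright,
    integral_sub intervalIntegrable_const intervalIntegrable_id,
    integral_sub intervalIntegrable_id intervalIntegrable_const]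
  simp only [integral_id, intervalIntegral.integral_const, smul_eq_mul]
  ring

theorem abs_integral_sub_le_of_abs_sub_le {f : ℝ → ℝ} {a b x M : ℝ} (hax : a ≤ x) (hxb : x ≤ b)
    (hM : ∀ u ∈ Icc a b, |f x - f u| ≤ M * |x - u|) :
    |∫ u in a..b, (f x - f u)| ≤ M * (((x - a) ^ 2 + (b - x) ^ 2) / 2) := by
  have hbound : ∀ᵐ u, u ∈ Ioc a b → ‖f x - f u‖ ≤ M * |x - u| :=
    .of_forall fun u hu => hM u (Ioc_subset_Icc_self hu)
  have hg : IntervalIntegrable (fun u => M * |x - u|) volume a b :=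
    (by fun_prop : Continuous fun u => M * |x - u|).intervalIntegrable a b
  calc |∫ u in a..b, (f x - f u)|
      ≤ ∫ u in a..b, M * |x - u| :=
        norm_integral_le_of_norm_le (hax.trans hxb) hbound hg
    _ = M * (((x - a) ^ 2 + (b - x) ^ 2) / 2) := by
        rw [intervalIntegral.integral_const_mul, integral_abs_sub_eq hax hxb]

theorem sub_average_eq_average_sub {f : ℝ → ℝ} {a b : ℝ} (hab : a ≠ b)
    (hf : IntervalIntegrable f volume a b) (x : ℝ) :
    f x - (1 / (b - a)) * ∫ u in a..b, f u = (1 / (b - a)) * ∫ u in a..b, (f x - f u) := by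
  rw [integral_sub intervalIntegrable_const hf, intervalIntegral.integral_const, smul_eq_mul]
  field_simp [sub_ne_zero.2 hab.symm]

theorem abs_sub_average_le_of_abs_sub_le {f : ℝ → ℝ} {a b x M : ℝ} (hab : a < b)
    (hx : x ∈ Icc a b) (hf : IntervalIntegrable f volume a b)
    (hM : ∀ u ∈ Icc a b, |f x - f u| ≤ M * |x - u|) :
    |f x - (1 / (b - a)) * ∫ u in a..b, f u| ≤
      M / (b - a) * (((x - a) ^ 2 + (b - x) ^ 2) / 2) := by
  have hba : 0 < 1 / (b - a) := one_div_pos.2 (sub_pos.2 hab)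
  calc |f x - (1 / (b - a)) * ∫ u in a..b, f u|
      = 1 / (b - a) * |∫ u in a..b, (f x - f u)| := by
        rw [sub_average_eq_average_sub hab.ne hf, abs_mul, abs_of_pos hba]
    _ ≤ 1 / (b - a) * (M * (((x - a) ^ 2 + (b - x) ^ 2) / 2)) := by
        gcongr
        exact abs_integral_sub_le_of_abs_sub_le hx.1 hx.2 hM
    _ = M / (b - a) * (((x - a) ^ 2 + (b - x) ^ 2) / 2) := by ring

theorem midpoint_bounded_deriv_general
    (a b c d M : ℝ) (f f' : ℝ → ℝ) (hab : a < b)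
    (hsub : Icc a b ⊆ Ioo c d)
    (hf : ∀ x ∈ Ioo c d, HasDerivAt f (f' x) x)
    (hM : ∀ x ∈ Icc a b, |f' x| ≤ M) :
    |f ((a + b) / 2) - (1 / (b - a)) * ∫ u in a..b, f u| ≤
      M * (b - a) / 4 := by
  have hderiv : ∀ x ∈ Icc a b, HasDerivWithinAt f (f' x) (Icc a b) x :=
    fun x hx => (hf x (hsub hx)).hasDerivWithinAt
  have hint : IntervalIntegrable f volume a b :=
    (HasDerivWithinAt.continuousOn hderiv).intervalIntegrable_of_Icc hab.le
  have hmid : (a + b) / 2 ∈ Icc a b := ⟨by linarith, by linarith⟩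
  have hlip : ∀ u ∈ Icc a b, |f ((a + b) / 2) - f u| ≤ M * |(a + b) / 2 - u| :=
    fun u hu => (convex_Icc a b).norm_image_sub_le_of_norm_hasDerivWithin_le hderiv hM hu hmid
  calc |f ((a + b) / 2) - (1 / (b - a)) * ∫ u in a..b, f u|
      ≤ M / (b - a) * ((((a + b) / 2 - a) ^ 2 + (b - (a + b) / 2) ^ 2) / 2) :=
        abs_sub_average_le_of_abs_sub_le hab hmid hint hlip
    _ = M * (b - a) / 4 := by
        field_simp [(sub_pos.2 hab).ne']
        ring

theorem midpoint_bounded_deriv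
    (a b c d M : ℝ) (f f' : ℝ → ℝ) (hab : a < b)
    (hsub : Icc a b ⊆ Ioo c d)
    (hf : ∀ x ∈ Ioo c d, HasDerivAt f (f' x) x)
    (hM : ∀ x ∈ Icc a b, |f' x| ≤ M)
    (hconv : ∀ x ∈ Icc a b, ∀ y ∈ Icc a b, ∀ t ∈ Icc (0:ℝ) 1,
      |f' (t * x + (1 - t) * y)| ≤ t * |f' x| + (1 - t) * |f' y|) :
    |f ((a + b) / 2) - (1 / (b - a)) * ∫ u in a..b, f u| ≤
      M * (b - a) / 4 :=
  midpoint_bounded_deriv_general a b c d M f f' hab hsub hf hM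
end

section
/- Let A ⊆ ℝ be open and invex w.r.t. η satisfying Condition C, a, b ∈ A with a < a + η(b,a), and let g : A → [0,∞) be preinvex. Then for all t ∈ [0,1], g(a + t η(b,a)) + g(a + (1-t) η(b,a)) ≤ g(a) + g(a + η(b,a)). -/
open Set

theorem preinvex_sum_bound_condC
    (A : Set ℝ) (η : ℝ → ℝ → ℝ) (a b : ℝ) (g : ℝ → ℝ)
    (hA : IsOpen A)
    (hinv : ∀ x ∈ A, ∀ y ∈ A, ∀ t ∈ Icc (0:ℝ) 1, x + t * η y x ∈ A)
    (hC : ∀ x ∈ A, ∀ y ∈ A, ∀ t ∈ Icc (0:ℝ) 1,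
      η y (y + t * η x y) = -t * η x y ∧ η x (y + t * η x y) = (1 - t) * η x y)
    (ha : a ∈ A) (hb : b ∈ A) (hab : a < a + η b a)
    (hg0 : ∀ x ∈ A, 0 ≤ g x)
    (hpre : ∀ x ∈ A, ∀ y ∈ A, ∀ t ∈ Icc (0:ℝ) 1,
      g (x + t * η y x) ≤ (1 - t) * g x + t * g y) :
    ∀ t ∈ Icc (0:ℝ) 1,
      g (a + t * η b a) + g (a + (1 - t) * η b a) ≤ g a + g (a + η b a) := by
  intro t ht
  obtain ⟨ht0, ht1⟩ := ht
  have h1 : (1:ℝ) ∈ Icc (0:ℝ) 1 := ⟨by norm_num, le_refl _⟩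
  have hc : a + 1 * η b a ∈ A := hinv a ha b hb 1 h1
  rw [one_mul] at hc
  have hη : η a (a + η b a) = -η b a := by
    have := (hC b hb a ha 1 h1).1
    simpa using this
  have e1 := hpre _ hc a ha (1 - t) ⟨by linarith, by linarith⟩
  have e2 := hpre _ hc a ha t ⟨ht0, ht1⟩
  rw [hη] at e1 e2
  have id1 : a + η b a + (1 - t) * -η b a = a + t * η b a := by ring
  have id2 : a + η b a + t * -η b a = a + (1 - t) * η b a := by ring
  rw [id1] at e1
  rw [id2] at e2
  linarith
end

section
/- Let A ⊆ ℝ be open and invex w.r.t. η satisfying Condition C, a, b ∈ A with a < a + η(b,a), and let g : A → [0,∞) be preinvex and integrable on [a, a+η(b,a)]. Then (1/η(b,a)) ∫_a^{a+η(b,a)} g(u) du ≤ (g(a) + g(a + η(b,a)))/2. -/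
/-!
Condition C at `t = 1` gives `η a (a + η b a) = -η b a`, so preinvexity applied from `a + η b a`
towards `a` bounds `g` on `[a, a + η b a]` by its chord, exactly as for a convex function.
Integrating the chord bound gives the right-hand Hermite–Hadamard inequality.
-/

open MeasureTheory intervalIntegral Set

theorem le_chord_of_preinvex {A : Set ℝ} {η : ℝ → ℝ → ℝ} {g : ℝ → ℝ}
    (hpre : ∀ x ∈ A, ∀ y ∈ A, ∀ t ∈ Icc (0:ℝ) 1,
      g (x + t * η y x) ≤ (1 - t) * g x + t * g y)
    {a L : ℝ} (ha : a ∈ A) (hc : a + L ∈ A) (hη : η a (a + L) = -L)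
    {t : ℝ} (ht : t ∈ Icc (0:ℝ) 1) :
    g (a + t * L) ≤ (1 - t) * g a + t * g (a + L) := by
  have hback := hpre (a + L) hc a ha (1 - t) ⟨by linarith [ht.2], by linarith [ht.1]⟩
  calc g (a + t * L) = g (a + L + (1 - t) * η a (a + L)) := by rw [hη]; ring_nf
    _ ≤ (1 - (1 - t)) * g (a + L) + (1 - t) * g a := hback
    _ = (1 - t) * g a + t * g (a + L) := by ring

theorem integral_le_of_le_chord {g : ℝ → ℝ} {a L : ℝ} (hL : 0 < L)
    (hg : IntervalIntegrable g volume a (a + L))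
    (hchord : ∀ t ∈ Icc (0:ℝ) 1, g (a + t * L) ≤ (1 - t) * g a + t * g (a + L)) :
    L⁻¹ * ∫ u in a..a + L, g u ≤ (g a + g (a + L)) / 2 := by
  have hg' : IntervalIntegrable (fun t => g (a + t * L)) volume 0 1 := by
    simpa [hL.ne'] using (hg.comp_add_left a).comp_mul_right (c := L)
  calc L⁻¹ * ∫ u in a..a + L, g u = ∫ t in (0:ℝ)..1, g (a + t * L) := by
        simp only [mul_comm _ L, integral_comp_add_mul g hL.ne', mul_zero, add_zero, mul_one,
          smul_eq_mul]
    _ ≤ ∫ t in (0:ℝ)..1, ((1 - t) * g a + t * g (a + L)) :=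
        integral_mono_on zero_le_one hg'
          ((by fun_prop : Continuous fun t => (1 - t) * g a + t * g (a + L)).intervalIntegrable _ _)
          hchord
    _ = (g a + g (a + L)) / 2 := by
        have hlin : ∀ t : ℝ, (1 - t) * g a + t * g (a + L) = g a + t * (g (a + L) - g a) :=
          fun t => by ring
        simp only [hlin, intervalIntegrable_const, intervalIntegrable_id,
          IntervalIntegrable.mul_const, intervalIntegral.integral_add, intervalIntegral.integral_const,
          intervalIntegral.integral_mul_const, integral_id, sub_zero, smul_eq_mul]
        ring

theorem hermite_hadamard_right_preinvex_general
    (A : Set ℝ) (η : ℝ → ℝ → ℝ) (a b : ℝ) (g : ℝ → ℝ)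
    (hinv : ∀ x ∈ A, ∀ y ∈ A, ∀ t ∈ Icc (0:ℝ) 1, x + t * η y x ∈ A)
    (hC : ∀ x ∈ A, ∀ y ∈ A, ∀ t ∈ Icc (0:ℝ) 1,
      η y (y + t * η x y) = -t * η x y ∧ η x (y + t * η x y) = (1 - t) * η x y)
    (ha : a ∈ A) (hb : b ∈ A) (hab : a < a + η b a)
    (hpre : ∀ x ∈ A, ∀ y ∈ A, ∀ t ∈ Icc (0:ℝ) 1,
      g (x + t * η y x) ≤ (1 - t) * g x + t * g y)
    (hint : IntervalIntegrable g volume a (a + η b a)) :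
    (1 / η b a) * ∫ u in a..(a + η b a), g u ≤ (g a + g (a + η b a)) / 2 := by
  have hL : 0 < η b a := by linarith
  have hc : a + η b a ∈ A := by simpa using hinv a ha b hb 1 ⟨zero_le_one, le_rfl⟩
  have hη : η a (a + η b a) = -η b a := by
    simpa using (hC b hb a ha 1 ⟨zero_le_one, le_rfl⟩).1
  rw [one_div]
  exact integral_le_of_le_chord hL hint fun t ht => le_chord_of_preinvex hpre ha hc hη ht

theorem hermite_hadamard_right_preinvex
    (A : Set ℝ) (η : ℝ → ℝ → ℝ) (a b : ℝ) (g : ℝ → ℝ)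
    (hA : IsOpen A)
    (hinv : ∀ x ∈ A, ∀ y ∈ A, ∀ t ∈ Icc (0:ℝ) 1, x + t * η y x ∈ A)
    (hC : ∀ x ∈ A, ∀ y ∈ A, ∀ t ∈ Icc (0:ℝ) 1,
      η y (y + t * η x y) = -t * η x y ∧ η x (y + t * η x y) = (1 - t) * η x y)
    (ha : a ∈ A) (hb : b ∈ A) (hab : a < a + η b a)
    (hg0 : ∀ x ∈ A, 0 ≤ g x)
    (hpre : ∀ x ∈ A, ∀ y ∈ A, ∀ t ∈ Icc (0:ℝ) 1,
      g (x + t * η y x) ≤ (1 - t) * g x + t * g y)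
    (hint : IntervalIntegrable g volume a (a + η b a)) :
    (1 / η b a) * ∫ u in a..(a + η b a), g u ≤ (g a + g (a + η b a)) / 2 :=
  hermite_hadamard_right_preinvex_general A η a b g hinv hC ha hb hab hpre hint
end

section
/- Let A ⊆ ℝ be open and invex w.r.t. η satisfying Condition C, a, b ∈ A with a < a + η(b,a). Let f : A → ℝ be differentiable with f' integrable on [a, a+η(b,a)], and suppose |f'|^q is preinvex on [a, a+η(b,a)] for some q > 1 with 1/p + 1/q = 1. Then for all x ∈ [a, a+η(b,a)], |f(x) - (1/η(b,a)) ∫_a^{a+η(b,a)} f(u) du| ≤ (1/(p+1))^{1/p} { ((x-a)²/η(b,a)) ((|f'(a)|^q + |f'(x)|^q)/2)^{1/q} + ((a+η(b,a)-x)²/η(b,a)) ((|f'(a+η(b,a))|^q + |f'(x)|^q)/2)^{1/q} }. -/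
open MeasureTheory intervalIntegral Set

/-!
Integrating by parts against the kernel `u - a` on `[a, x]` and `u - L` on `[x, L]`,
`L = a + η b a`, writes `η b a * f x - ∫ f` as two weighted integrals of `f'`. Condition C
forces `η a x = a - x` and `η x L = x - L`, so preinvexity of `|f'| ^ q` is ordinary convexity
on the segments `[a, x]` and `[x, L]`: there `|f'| ^ q` lies below its chord, whose integral is
the trapezoidal value. Hölder's inequality on each piece, with `∫ |u - a| ^ p` computed
exactly, gives the bound.
-/

section Invexity

variable {A : Set ℝ} {η : ℝ → ℝ → ℝ} {a b : ℝ}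

theorem Icc_subset_of_invex
    (hinv : ∀ x ∈ A, ∀ y ∈ A, ∀ t ∈ Icc (0:ℝ) 1, x + t * η y x ∈ A)
    (ha : a ∈ A) (hb : b ∈ A) (hab : 0 < η b a) : Icc a (a + η b a) ⊆ A := by
  intro u hu
  have ht : (u - a) / η b a ∈ Icc (0:ℝ) 1 :=
    ⟨div_nonneg (by linarith [hu.1]) hab.le, (div_le_one hab).2 (by linarith [hu.2])⟩
  simpa [div_mul_cancel₀ _ hab.ne'] using hinv a ha b hb _ ht

theorem eta_eq_of_conditionC
    (hC : ∀ x ∈ A, ∀ y ∈ A, ∀ t ∈ Icc (0:ℝ) 1,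
      η y (y + t * η x y) = -t * η x y ∧ η x (y + t * η x y) = (1 - t) * η x y)
    (ha : a ∈ A) (hb : b ∈ A) (hab : 0 < η b a) {x : ℝ} (hx : x ∈ Icc a (a + η b a))
    (hxA : x ∈ A) : η a x = a - x ∧ η x (a + η b a) = x - (a + η b a) := by
  set t := (x - a) / η b a
  have ht : t ∈ Icc (0:ℝ) 1 :=
    ⟨div_nonneg (by linarith [hx.1]) hab.le, (div_le_one hab).2 (by linarith [hx.2])⟩
  have hxt : a + t * η b a = x := by simp [t, div_mul_cancel₀ _ hab.ne']
  obtain ⟨hax, hbx⟩ := hC b hb a ha t ht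
  rw [hxt] at hax hbx
  have hbx' : η b x = a + η b a - x := by rw [hbx, ← hxt]; ring
  refine ⟨by rw [hax, ← hxt]; ring, ?_⟩
  have hxL := (hC b hb x hxA 1 (by simp)).1
  rw [hbx', show x + 1 * (a + η b a - x) = a + η b a by ring] at hxL
  rw [hxL]; ring

end Invexity

theorem ostrowski_identity {f f' : ℝ → ℝ} {a b x : ℝ} (hx : x ∈ Icc a b)
    (hf : ∀ u ∈ Icc a b, HasDerivAt f (f' u) u) (hf' : IntervalIntegrable f' volume a b) :
    (b - a) * f x - ∫ u in a..b, f u =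
      (∫ u in a..x, (u - a) * f' u) + ∫ u in x..b, (u - b) * f' u := by
  have hax : uIcc a x ⊆ Icc a b := by rw [uIcc_of_le hx.1]; exact Icc_subset_Icc le_rfl hx.2
  have hxb : uIcc x b ⊆ Icc a b := by rw [uIcc_of_le hx.2]; exact Icc_subset_Icc hx.1 le_rfl
  have hab : uIcc a b = Icc a b := uIcc_of_le (hx.1.trans hx.2)
  have hfc : ContinuousOn f (Icc a b) := fun u hu => (hf u hu).continuousAt.continuousWithinAt
  have parts : ∀ c d e, uIcc c d ⊆ Icc a b →
      ∫ u in c..d, (u - e) * f' u = (d - e) * f d - (c - e) * f c - ∫ u in c..d, f u :=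
    fun c d e hcd => by
      simpa using integral_mul_deriv_eq_deriv_mul (fun y _ => (hasDerivAt_id y).sub_const e)
        (fun y hy => hf y (hcd hy)) intervalIntegrable_const (hf'.mono_set (hab ▸ hcd))
  rw [parts a x a hax, parts x b b hxb,
    ← integral_add_adjacent_intervals ((hfc.mono hax).intervalIntegrable)
      ((hfc.mono hxb).intervalIntegrable)]
  ring

theorem le_affine_of_segment {g : ℝ → ℝ} {c d : ℝ} (hcd : c < d)
    (hg : ∀ t ∈ Icc (0:ℝ) 1, g (d + t * (c - d)) ≤ (1 - t) * g d + t * g c)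
    {u : ℝ} (hu : u ∈ Icc c d) : g u ≤ ((d - u) * g c + (u - c) * g d) / (d - c) := by
  have hdc : 0 < d - c := sub_pos.2 hcd
  have ht : (d - u) / (d - c) ∈ Icc (0:ℝ) 1 :=
    ⟨div_nonneg (by linarith [hu.2]) hdc.le, (div_le_one hdc).2 (by linarith [hu.1])⟩
  convert hg _ ht using 1
  · congr 1; field_simp; ring
  · field_simp; ring

theorem integral_affine_interp (c d Mc Md : ℝ) :
    ∫ u in c..d, ((d - u) * Mc + (u - c) * Md) / (d - c) = (d - c) * ((Mc + Md) / 2) := by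
  rcases eq_or_ne d c with rfl | hcd
  · simp
  have hdc : d - c ≠ 0 := sub_ne_zero.2 hcd
  have hlin : (fun u => ((d - u) * Mc + (u - c) * Md) / (d - c)) =
      fun u => (d * Mc - c * Md) / (d - c) + (Md - Mc) / (d - c) * u := by
    funext u; field_simp; ring
  rw [hlin, intervalIntegral.integral_add intervalIntegrable_const
    (intervalIntegrable_id.const_mul _),
    intervalIntegral.integral_const_mul, integral_id, intervalIntegral.integral_const, smul_eq_mul]
  field_simp
  ring

theorem integral_abs_sub_left_rpow {c d p : ℝ} (hcd : c ≤ d) (hp : -1 < p) :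
    ∫ u in c..d, |u - c| ^ p = (d - c) ^ (p + 1) / (p + 1) := by
  rw [integral_congr (g := fun u => (u - c) ^ p) fun u hu => by
      rw [uIcc_of_le hcd] at hu; simp [abs_of_nonneg (sub_nonneg.2 hu.1)],
    integral_comp_sub_right (fun u => u ^ p), sub_self, integral_rpow (Or.inl hp),
    Real.zero_rpow (by linarith)]
  ring

theorem integral_abs_sub_right_rpow {c d p : ℝ} (hcd : c ≤ d) (hp : -1 < p) :
    ∫ u in c..d, |u - d| ^ p = (d - c) ^ (p + 1) / (p + 1) := by
  rw [integral_congr (g := fun u => (d - u) ^ p) fun u hu => by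
      rw [uIcc_of_le hcd] at hu; simp [abs_of_nonpos (sub_nonpos.2 hu.2)],
    integral_comp_sub_left (fun u => u ^ p), sub_self, integral_rpow (Or.inl hp),
    Real.zero_rpow (by linarith)]
  ring

theorem Real.HolderConjugate.rpow_add_one_rpow_mul_rpow {p q X : ℝ} (hpq : p.HolderConjugate q)
    (hX : 0 ≤ X) : (X ^ (p + 1)) ^ (1 / p) * X ^ (1 / q) = X ^ 2 := by
  have hexp : (p + 1) * (1 / p) + 1 / q = 2 := by
    rw [add_mul, mul_one_div_cancel hpq.ne_zero, one_mul, add_assoc, hpq.one_div_add_one_div]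
    norm_num
  rw [← Real.rpow_mul hX, ← Real.rpow_add' hX (by rw [hexp]; norm_num), hexp]
  norm_cast

theorem abs_intervalIntegral_mul_le_Lp_mul_Lq {p q : ℝ} (hpq : p.HolderConjugate q)
    {c d : ℝ} (hcd : c ≤ d) {f g : ℝ → ℝ}
    (hf : MemLp f (ENNReal.ofReal p) (volume.restrict (Ioc c d)))
    (hg : MemLp g (ENNReal.ofReal q) (volume.restrict (Ioc c d))) :
    |∫ u in c..d, f u * g u| ≤
      (∫ u in c..d, |f u| ^ p) ^ (1 / p) * (∫ u in c..d, |g u| ^ q) ^ (1 / q) := by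
  simp only [integral_of_le hcd]
  calc |∫ u in Ioc c d, f u * g u| ≤ ∫ u in Ioc c d, ‖f u‖ * ‖g u‖ := by
        simpa only [Real.norm_eq_abs, abs_mul] using
          MeasureTheory.abs_integral_le_integral_abs (f := fun u => f u * g u)
    _ ≤ _ := integral_mul_norm_le_Lp_mul_Lq hpq hf hg

theorem memLp_ofReal_of_integrable_abs_rpow {α : Type*} [MeasurableSpace α] {μ : Measure α}
    {f : α → ℝ} {p : ℝ} (hp : 0 < p) (hf : AEStronglyMeasurable f μ)
    (hfp : Integrable (fun x => |f x| ^ p) μ) : MemLp f (ENNReal.ofReal p) μ :=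
  (integrable_norm_rpow_iff hf (by simpa using hp) ENNReal.ofReal_ne_top).1 <| by
    simpa [ENNReal.toReal_ofReal hp.le] using hfp

theorem integral_abs_rpow_le_of_le_affine {φ : ℝ → ℝ} {c d q Mc Md : ℝ} (hcd : c ≤ d)
    (hφ : IntegrableOn (fun u => |φ u| ^ q) (Ioc c d))
    (hbnd : ∀ u ∈ Icc c d, |φ u| ^ q ≤ ((d - u) * Mc + (u - c) * Md) / (d - c)) :
    ∫ u in c..d, |φ u| ^ q ≤ (d - c) * ((Mc + Md) / 2) := by
  rw [← integral_affine_interp, integral_of_le hcd, integral_of_le hcd]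
  exact setIntegral_mono_on hφ (by fun_prop : Continuous _).integrableOn_Ioc measurableSet_Ioc
    fun u hu => hbnd u (Ioc_subset_Icc_self hu)

theorem abs_integral_mul_le_of_rpow_le_affine {p q : ℝ} (hpq : p.HolderConjugate q) {c d : ℝ}
    (hcd : c < d) {w φ : ℝ → ℝ} (hw : Continuous w)
    (hwp : ∫ u in c..d, |w u| ^ p = (d - c) ^ (p + 1) / (p + 1))
    (hφ : IntervalIntegrable φ volume c d) {Mc Md : ℝ}
    (hbnd : ∀ u ∈ Icc c d, |φ u| ^ q ≤ ((d - u) * Mc + (u - c) * Md) / (d - c)) :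
    |∫ u in c..d, w u * φ u| ≤
      (1 / (p + 1)) ^ (1 / p) * (d - c) ^ 2 * ((Mc + Md) / 2) ^ (1 / q) := by
  have hdc : 0 < d - c := sub_pos.2 hcd
  have hM : 0 ≤ (Mc + Md) / 2 := by
    have hc := (Real.rpow_nonneg (abs_nonneg (φ c)) q).trans (hbnd c ⟨le_rfl, hcd.le⟩)
    have hd := (Real.rpow_nonneg (abs_nonneg (φ d)) q).trans (hbnd d ⟨hcd.le, le_rfl⟩)
    simp only [sub_self, zero_mul, add_zero, zero_add, mul_div_cancel_left₀ _ hdc.ne'] at hc hd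
    linarith
  have hchord : Continuous fun u => ((d - u) * Mc + (u - c) * Md) / (d - c) := by fun_prop
  have hφq : IntegrableOn (fun u => |φ u| ^ q) (Ioc c d) :=
    hchord.integrableOn_Ioc.mono'
      (hφ.1.aemeasurable.abs.pow_const q).aestronglyMeasurable <| by
        filter_upwards [ae_restrict_mem measurableSet_Ioc] with u hu
        rw [Real.norm_of_nonneg (by positivity)]
        exact hbnd u (Ioc_subset_Icc_self hu)
  have hwLp : MemLp w (ENNReal.ofReal p) (volume.restrict (Ioc c d)) :=
    memLp_ofReal_of_integrable_abs_rpow hpq.pos hw.aestronglyMeasurable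
      ((hw.abs.rpow_const fun _ => Or.inr hpq.nonneg).integrableOn_Ioc)
  have hφLq : MemLp φ (ENNReal.ofReal q) (volume.restrict (Ioc c d)) :=
    memLp_ofReal_of_integrable_abs_rpow hpq.symm.pos hφ.1.aestronglyMeasurable hφq
  have hp1 : 0 < p + 1 := by linarith [hpq.pos]
  calc |∫ u in c..d, w u * φ u|
      ≤ (∫ u in c..d, |w u| ^ p) ^ (1 / p) * (∫ u in c..d, |φ u| ^ q) ^ (1 / q) :=
        abs_intervalIntegral_mul_le_Lp_mul_Lq hpq hcd.le hwLp hφLq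
    _ ≤ ((d - c) ^ (p + 1) / (p + 1)) ^ (1 / p) * ((d - c) * ((Mc + Md) / 2)) ^ (1 / q) := by
        have hφq_nonneg : 0 ≤ ∫ u in c..d, |φ u| ^ q :=
          integral_nonneg_of_forall hcd.le fun u => Real.rpow_nonneg (abs_nonneg _) _
        rw [hwp]
        have hq_inv : 0 ≤ 1 / q := hpq.symm.one_div_nonneg
        gcongr
        exact integral_abs_rpow_le_of_le_affine hcd.le hφq hbnd
    _ = (1 / (p + 1)) ^ (1 / p) * (d - c) ^ 2 * ((Mc + Md) / 2) ^ (1 / q) := by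
        rw [div_eq_mul_one_div, Real.mul_rpow (by positivity) (by positivity),
          Real.mul_rpow hdc.le hM, ← hpq.rpow_add_one_rpow_mul_rpow hdc.le]
        ring

theorem abs_integral_mul_le_of_segment_rpow {p q : ℝ} (hpq : p.HolderConjugate q) {c d : ℝ}
    (hcd : c ≤ d) {w φ : ℝ → ℝ} (hw : Continuous w)
    (hwp : ∫ u in c..d, |w u| ^ p = (d - c) ^ (p + 1) / (p + 1))
    (hφ : IntervalIntegrable φ volume c d)
    (hseg : ∀ t ∈ Icc (0:ℝ) 1,
      |φ (d + t * (c - d))| ^ q ≤ (1 - t) * |φ d| ^ q + t * |φ c| ^ q) :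
    |∫ u in c..d, w u * φ u| ≤
      (1 / (p + 1)) ^ (1 / p) * (d - c) ^ 2 * ((|φ c| ^ q + |φ d| ^ q) / 2) ^ (1 / q) := by
  rcases hcd.eq_or_lt with rfl | hcd
  · simp
  · exact abs_integral_mul_le_of_rpow_le_affine hpq hcd hw hwp hφ
      fun u hu => le_affine_of_segment (g := fun u => |φ u| ^ q) hcd hseg hu

theorem ostrowski_preinvex_holder_general
    (A : Set ℝ) (η : ℝ → ℝ → ℝ) (a b p q : ℝ) (f f' : ℝ → ℝ)
    (hinv : ∀ x ∈ A, ∀ y ∈ A, ∀ t ∈ Icc (0:ℝ) 1, x + t * η y x ∈ A)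
    (hC : ∀ x ∈ A, ∀ y ∈ A, ∀ t ∈ Icc (0:ℝ) 1,
      η y (y + t * η x y) = -t * η x y ∧ η x (y + t * η x y) = (1 - t) * η x y)
    (ha : a ∈ A) (hb : b ∈ A) (hab : a < a + η b a)
    (hf : ∀ x ∈ A, HasDerivAt f (f' x) x)
    (hint : IntervalIntegrable f' volume a (a + η b a))
    (hq : 1 < q) (hpq : 1 / p + 1 / q = 1)
    (hpre : ∀ x ∈ Icc a (a + η b a), ∀ y ∈ Icc a (a + η b a), ∀ t ∈ Icc (0:ℝ) 1,
      |f' (x + t * η y x)| ^ q ≤ (1 - t) * |f' x| ^ q + t * |f' y| ^ q) :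
    ∀ x ∈ Icc a (a + η b a),
      |f x - (1 / η b a) * ∫ u in a..(a + η b a), f u| ≤
        (1 / (p + 1)) ^ (1 / p) *
          (((x - a) ^ 2 / η b a) * ((|f' a| ^ q + |f' x| ^ q) / 2) ^ (1 / q) +
           ((a + η b a - x) ^ 2 / η b a) *
             ((|f' (a + η b a)| ^ q + |f' x| ^ q) / 2) ^ (1 / q)) := by
  intro x hx
  have hh : 0 < η b a := by linarith
  have hholder : p.HolderConjugate q :=
    (Real.holderConjugate_iff.mpr ⟨by simpa using hq, by simpa [add_comm] using hpq⟩).symm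
  have hp : -1 < p := by linarith [hholder.pos]
  have hsub := Icc_subset_of_invex hinv ha hb hh
  obtain ⟨hax, hxL⟩ := eta_eq_of_conditionC hC ha hb hh hx (hsub hx)
  set L := a + η b a
  have haI : a ∈ Icc a L := ⟨le_rfl, hab.le⟩
  have hLI : L ∈ Icc a L := ⟨hab.le, le_rfl⟩
  have hsubint : ∀ {c d}, c ∈ Icc a L → d ∈ Icc a L → IntervalIntegrable f' volume c d :=
    fun hc hd => hint.mono_set (uIcc_subset_uIcc (by simpa [uIcc_of_le hab.le] using hc)
      (by simpa [uIcc_of_le hab.le] using hd))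
  have left := abs_integral_mul_le_of_segment_rpow hholder hx.1 (continuous_sub_right a)
    (integral_abs_sub_left_rpow hx.1 hp) (hsubint haI hx) fun t ht => by
      simpa [hax] using hpre x hx a haI t ht
  have right := abs_integral_mul_le_of_segment_rpow hholder hx.2 (continuous_sub_right L)
    (integral_abs_sub_right_rpow hx.2 hp) (hsubint hx hLI) fun t ht => by
      simpa [hxL] using hpre L hLI x hx t ht
  rw [add_comm (|f' x| ^ q)] at right
  have hid := ostrowski_identity hx (fun u hu => hf u (hsub hu)) hint
  rw [show L - a = η b a by simp [L]] at hid
  rw [show f x - 1 / η b a * ∫ u in a..L, f u = (η b a * f x - ∫ u in a..L, f u) / η b a by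
      field_simp, hid, abs_div, abs_of_pos hh, div_le_iff₀ hh]
  calc _ ≤ _ := abs_add_le _ _
    _ ≤ _ := add_le_add left right
    _ = _ := by field_simp

theorem ostrowski_preinvex_holder
    (A : Set ℝ) (η : ℝ → ℝ → ℝ) (a b p q : ℝ) (f f' : ℝ → ℝ)
    (hA : IsOpen A)
    (hinv : ∀ x ∈ A, ∀ y ∈ A, ∀ t ∈ Icc (0:ℝ) 1, x + t * η y x ∈ A)
    (hC : ∀ x ∈ A, ∀ y ∈ A, ∀ t ∈ Icc (0:ℝ) 1,
      η y (y + t * η x y) = -t * η x y ∧ η x (y + t * η x y) = (1 - t) * η x y)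
    (ha : a ∈ A) (hb : b ∈ A) (hab : a < a + η b a)
    (hf : ∀ x ∈ A, HasDerivAt f (f' x) x)
    (hint : IntervalIntegrable f' volume a (a + η b a))
    (hq : 1 < q) (hpq : 1 / p + 1 / q = 1)
    (hpre : ∀ x ∈ Icc a (a + η b a), ∀ y ∈ Icc a (a + η b a), ∀ t ∈ Icc (0:ℝ) 1,
      |f' (x + t * η y x)| ^ q ≤ (1 - t) * |f' x| ^ q + t * |f' y| ^ q) :
    ∀ x ∈ Icc a (a + η b a),
      |f x - (1 / η b a) * ∫ u in a..(a + η b a), f u| ≤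
        (1 / (p + 1)) ^ (1 / p) *
          (((x - a) ^ 2 / η b a) * ((|f' a| ^ q + |f' x| ^ q) / 2) ^ (1 / q) +
           ((a + η b a - x) ^ 2 / η b a) *
             ((|f' (a + η b a)| ^ q + |f' x| ^ q) / 2) ^ (1 / q)) :=
  ostrowski_preinvex_holder_general A η a b p q f f' hinv hC ha hb hab hf hint hq hpq hpre
end

section
/- Let A ⊆ ℝ be open and invex w.r.t. η satisfying Condition C, a, b ∈ A with a < a + η(b,a), f : A → ℝ differentiable with f' integrable on [a, a+η(b,a)], |f'|^q preinvex on [a, a+η(b,a)] for some q > 1 with conjugate p, and |f'(x)| ≤ M for all x ∈ [a, a+η(b,a)]. Then for all such x, |f(x) - (1/η(b,a)) ∫_a^{a+η(b,a)} f(u) du| ≤ (1/(p+1))^{1/p} M ((x-a)² + (a+η(b,a)-x)²)/η(b,a). -/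
open MeasureTheory intervalIntegral Set

theorem ostrowski_preinvex_holder_bounded
    (A : Set ℝ) (η : ℝ → ℝ → ℝ) (a b p q M : ℝ) (f f' : ℝ → ℝ)
    (hA : IsOpen A)
    (hinv : ∀ x ∈ A, ∀ y ∈ A, ∀ t ∈ Icc (0:ℝ) 1, x + t * η y x ∈ A)
    (hC : ∀ x ∈ A, ∀ y ∈ A, ∀ t ∈ Icc (0:ℝ) 1,
      η y (y + t * η x y) = -t * η x y ∧ η x (y + t * η x y) = (1 - t) * η x y)
    (ha : a ∈ A) (hb : b ∈ A) (hab : a < a + η b a)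
    (hf : ∀ x ∈ A, HasDerivAt f (f' x) x)
    (hint : IntervalIntegrable f' volume a (a + η b a))
    (hq : 1 < q) (hpq : 1 / p + 1 / q = 1)
    (hpre : ∀ x ∈ Icc a (a + η b a), ∀ y ∈ Icc a (a + η b a), ∀ t ∈ Icc (0:ℝ) 1,
      |f' (x + t * η y x)| ^ q ≤ (1 - t) * |f' x| ^ q + t * |f' y| ^ q)
    (hM : ∀ x ∈ Icc a (a + η b a), |f' x| ≤ M) :
    ∀ x ∈ Icc a (a + η b a),
      |f x - (1 / η b a) * ∫ u in a..(a + η b a), f u| ≤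
        (1 / (p + 1)) ^ (1 / p) * M *
          (((x - a) ^ 2 + (a + η b a - x) ^ 2) / η b a) := by
  set L := η b a with hLdef
  set c := a + L with hcdef
  have hL : 0 < L := by linarith
  have hac : a ≤ c := hab.le
  -- p > 1
  have hq0 : (0:ℝ) < 1 / q := by positivity
  have hq1 : 1 / q < 1 := by
    rw [div_lt_one (by linarith)]; linarith
  have hp0 : 0 < 1 / p := by linarith
  have hpp : 0 < p := by
    by_contra h
    push_neg at h
    have : 1 / p ≤ 0 := div_nonpos_of_nonneg_of_nonpos one_pos.le h
    linarith
  have hp1 : 1 < p := by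
    have h1 : 1 / p < 1 := by linarith
    rw [div_lt_one hpp] at h1; linarith
  -- half ≤ (1/(p+1))^(1/p)
  have hhalf : (1:ℝ)/2 ≤ (1 / (p + 1)) ^ (1 / p) := by
    have hbern : 1 + p * 1 ≤ (1 + 1 : ℝ) ^ p :=
      one_add_mul_self_le_rpow_one_add (by norm_num) hp1.le
    have hple : p + 1 ≤ (2:ℝ) ^ p := by
      calc p + 1 = 1 + p * 1 := by ring
      _ ≤ (1 + 1 : ℝ) ^ p := hbern
      _ = (2:ℝ) ^ p := by norm_num
    have hroot : (p + 1) ^ (1 / p) ≤ 2 := by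
      calc (p + 1) ^ (1 / p) ≤ ((2:ℝ) ^ p) ^ (1 / p) :=
            Real.rpow_le_rpow (by linarith) hple hp0.le
      _ = (2:ℝ) ^ (p * (1 / p)) := by rw [← Real.rpow_mul (by norm_num)]
      _ = 2 := by rw [mul_one_div_cancel hpp.ne', Real.rpow_one]
    have hpos : 0 < (p + 1) ^ (1 / p) := Real.rpow_pos_of_pos (by linarith) _
    have heq : (1 / (p + 1) : ℝ) ^ (1 / p) = 1 / ((p + 1) ^ (1 / p)) := by
      rw [one_div, Real.inv_rpow (by linarith)]
      exact (one_div _).symm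
    rw [heq]
    exact one_div_le_one_div_of_le hpos hroot
  -- Icc a c ⊆ A
  have hsub : Icc a c ⊆ A := by
    intro y hy
    have := hinv a ha b hb ((y - a) / L)
      ⟨div_nonneg (by linarith [hy.1]) hL.le, by
        rw [div_le_one hL]; have := hy.2; simp only [hcdef] at this; linarith⟩
    rwa [div_mul_cancel₀ _ hL.ne', add_sub_cancel] at this
  have hM0 : 0 ≤ M := (abs_nonneg _).trans (hM a ⟨le_refl a, hac⟩)
  -- f continuous on Icc a c, integrable
  have hfc : ContinuousOn f (Icc a c) := fun y hy =>
    ((hf y (hsub hy)).continuousAt).continuousWithinAt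
  have hfint : IntervalIntegrable f volume a c :=
    (hfc.mono (by rw [uIcc_of_le hac])).intervalIntegrable
  -- Lipschitz bound
  have hlip : ∀ x ∈ Icc a c, ∀ u ∈ Icc a c, |f x - f u| ≤ M * |x - u| := by
    intro x hx u hu
    have := (convex_Icc a c).norm_image_sub_le_of_norm_hasDerivWithin_le
      (fun y hy => (hf y (hsub hy)).hasDerivWithinAt)
      (fun y hy => by simpa [Real.norm_eq_abs] using hM y hy) hu hx
    simpa [Real.norm_eq_abs] using this
  intro x hx
  have hax : a ≤ x := hx.1
  have hxc : x ≤ c := hx.2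
  -- ∫ |x - u| du = ((x-a)^2 + (c-x)^2)/2
  have habs : (∫ u in a..c, |x - u|) = ((x - a) ^ 2 + (c - x) ^ 2) / 2 := by
    have h1 : (∫ u in a..x, |x - u|) = (x - a) ^ 2 / 2 := by
      rw [intervalIntegral.integral_congr (g := fun u => x - u)
        (fun u hu => by
          rw [uIcc_of_le hax] at hu
          exact abs_of_nonneg (by linarith [hu.2]))]
      rw [intervalIntegral.integral_sub intervalIntegrable_const
        intervalIntegral.intervalIntegrable_id,
        intervalIntegral.integral_const, integral_id, smul_eq_mul]
      ring
    have h2 : (∫ u in x..c, |x - u|) = (c - x) ^ 2 / 2 := by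
      rw [intervalIntegral.integral_congr (g := fun u => u - x)
        (fun u hu => by
          rw [uIcc_of_le hxc] at hu
          rw [abs_sub_comm]
          exact abs_of_nonneg (by linarith [hu.1]))]
      rw [intervalIntegral.integral_sub intervalIntegral.intervalIntegrable_id
        intervalIntegrable_const,
        intervalIntegral.integral_const, integral_id, smul_eq_mul]
      ring
    rw [← intervalIntegral.integral_add_adjacent_intervals (b := x)
      (by apply ContinuousOn.intervalIntegrable; fun_prop)
      (by apply ContinuousOn.intervalIntegrable; fun_prop), h1, h2]
    ring
  -- main identity
  have hid : f x - (1 / L) * ∫ u in a..c, f u = (1 / L) * ∫ u in a..c, (f x - f u) := by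
    rw [intervalIntegral.integral_sub intervalIntegrable_const hfint,
      intervalIntegral.integral_const]
    have hca : c - a = L := by simp [hcdef]
    rw [hca, smul_eq_mul, mul_sub, one_div, inv_mul_cancel_left₀ hL.ne']
  have hcont1 : IntervalIntegrable (fun u => f x - f u) volume a c :=
    intervalIntegrable_const.sub hfint
  have habs1 : IntervalIntegrable (fun u => |f x - f u|) volume a c := hcont1.abs
  have habs2 : IntervalIntegrable (fun u => M * |x - u|) volume a c := by
    apply ContinuousOn.intervalIntegrable; fun_prop
  have hbound : |∫ u in a..c, (f x - f u)| ≤ M * (((x - a) ^ 2 + (c - x) ^ 2) / 2) := by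
    calc |∫ u in a..c, (f x - f u)| ≤ ∫ u in a..c, |f x - f u| :=
          intervalIntegral.abs_integral_le_integral_abs hac
    _ ≤ ∫ u in a..c, M * |x - u| := by
          apply intervalIntegral.integral_mono_on hac habs1 habs2
          intro u hu
          exact hlip x hx u hu
    _ = M * (((x - a) ^ 2 + (c - x) ^ 2) / 2) := by
          rw [intervalIntegral.integral_const_mul, habs]
  have hmain : |f x - (1 / L) * ∫ u in a..c, f u| ≤
      (1/2) * M * (((x - a) ^ 2 + (c - x) ^ 2) / L) := by
    rw [hid, abs_mul, abs_of_pos (by positivity : (0:ℝ) < 1 / L)]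
    calc (1 / L) * |∫ u in a..c, (f x - f u)|
        ≤ (1 / L) * (M * (((x - a) ^ 2 + (c - x) ^ 2) / 2)) := by
          apply mul_le_mul_of_nonneg_left hbound (by positivity)
    _ = (1/2) * M * (((x - a) ^ 2 + (c - x) ^ 2) / L) := by
          ring
  refine hmain.trans ?_
  apply mul_le_mul_of_nonneg_right _ (by positivity)
  exact mul_le_mul_of_nonneg_right hhalf hM0
end

section
/- Let f be differentiable on an open interval containing [a,b] with a < b, and let q > 1 with conjugate exponent p (1/p + 1/q = 1). If |f'|^q is convex on [a,b], then |f((a+b)/2) - (1/(b-a)) ∫_a^b f(u) du| ≤ ((b-a)/16)(4/(p+1))^{1/p} [ (3|f'(a)|^q + |f'(b)|^q)^{1/q} + (3|f'(b)|^q + |f'(a)|^q)^{1/q} ]. -/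
/-!
Integrating by parts on the two halves of `[a, b]` with the kernels `x - a` and `x - b` gives
`(b - a) f(m) - ∫ f = ∫_a^m (x - a) f' + ∫_m^b (x - b) f'`, `m = (a + b) / 2`. On each half,
Hölder's inequality separates the kernel, whose `p`-th power integrates to
`((b - a) / 2)^(p + 1) / (p + 1)`, from `∫ |f'|^q`. The latter is bounded by the right-hand
Hermite–Hadamard inequality for the convex function `|f'|^q` on that half, combined with
`|f' m|^q ≤ (|f' a|^q + |f' b|^q) / 2`; this gives `(b - a) / 8 · (3 |f' a|^q + |f' b|^q)` on
`[a, m]` and symmetrically on `[m, b]`.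
-/

open MeasureTheory intervalIntegral Set

lemma integral_sub_mul_deriv {f f' : ℝ → ℝ} {α β x₀ : ℝ}
    (hf : ∀ x ∈ uIcc α β, HasDerivAt f (f' x) x) (hf' : IntervalIntegrable f' volume α β) :
    ∫ x in α..β, (x - x₀) * f' x = (β - x₀) * f β - (α - x₀) * f α - ∫ x in α..β, f x := by
  simpa using integral_mul_deriv_eq_deriv_mul (fun x _ => (hasDerivAt_id x).sub_const x₀) hf
    intervalIntegrable_const hf'

lemma sub_mul_midpoint_sub_integral_eq {f f' : ℝ → ℝ} {a b : ℝ} (hab : a ≤ b)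
    (hf : ∀ x ∈ Icc a b, HasDerivAt f (f' x) x) (hf' : IntervalIntegrable f' volume a b) :
    (b - a) * f ((a + b) / 2) - ∫ x in a..b, f x =
      (∫ x in a..(a + b) / 2, (x - a) * f' x) + ∫ x in (a + b) / 2..b, (x - b) * f' x := by
  have hm : (a + b) / 2 ∈ Icc a b := ⟨by linarith, by linarith⟩
  have hl : uIcc a ((a + b) / 2) ⊆ Icc a b := uIcc_subset_Icc (left_mem_Icc.2 hab) hm
  have hr : uIcc ((a + b) / 2) b ⊆ Icc a b := uIcc_subset_Icc hm (right_mem_Icc.2 hab)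
  have hfc : ContinuousOn f (uIcc a b) := fun x hx =>
    (hf x (by rwa [uIcc_of_le hab] at hx)).continuousAt.continuousWithinAt
  rw [integral_sub_mul_deriv (fun x hx => hf x (hl hx)) (hf'.mono_set (by rwa [uIcc_of_le hab])),
    integral_sub_mul_deriv (fun x hx => hf x (hr hx)) (hf'.mono_set (by rwa [uIcc_of_le hab])),
    ← integral_add_adjacent_intervals (b := (a + b) / 2)
      (hfc.intervalIntegrable.mono_set (by rwa [uIcc_of_le hab]))
      (hfc.intervalIntegrable.mono_set (by rwa [uIcc_of_le hab]))]
  ring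

lemma abs_midpoint_sub_average_le {f f' : ℝ → ℝ} {a b : ℝ} (hab : a < b)
    (hf : ∀ x ∈ Icc a b, HasDerivAt f (f' x) x) (hf' : IntervalIntegrable f' volume a b) :
    |f ((a + b) / 2) - 1 / (b - a) * ∫ x in a..b, f x| ≤
      (|∫ x in a..(a + b) / 2, (x - a) * f' x| + |∫ x in (a + b) / 2..b, (x - b) * f' x|) /
        (b - a) := by
  have hba : 0 < b - a := sub_pos.2 hab
  have hdiv : f ((a + b) / 2) - 1 / (b - a) * ∫ x in a..b, f x =
      ((b - a) * f ((a + b) / 2) - ∫ x in a..b, f x) / (b - a) := by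
    field_simp
  rw [hdiv, abs_div, abs_of_pos hba, sub_mul_midpoint_sub_integral_eq hab.le hf hf']
  gcongr
  exact abs_add_le _ _

lemma aestronglyMeasurable_of_hasDerivAt {f f' : ℝ → ℝ} {s : Set ℝ} (hs : MeasurableSet s)
    (hf : ∀ x ∈ s, HasDerivAt f (f' x) x) : AEStronglyMeasurable f' (volume.restrict s) :=
  (aestronglyMeasurable_deriv f _).congr <|
    (ae_restrict_iff' hs).2 <| ae_of_all _ fun x hx => (hf x hx).deriv

lemma memLp_of_convexOn_abs_rpow {g : ℝ → ℝ} {a b q : ℝ} (hq : 0 < q)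
    (hg : AEStronglyMeasurable g (volume.restrict (Icc a b)))
    (hconv : ConvexOn ℝ (Icc a b) fun x => |g x| ^ q) (r : ENNReal) :
    MemLp g r (volume.restrict (Icc a b)) := by
  refine MemLp.of_bound hg (max (|g a| ^ q) (|g b| ^ q) ^ q⁻¹) <|
    (ae_restrict_iff' measurableSet_Icc).2 <| ae_of_all _ fun x hx => ?_
  have hab : a ≤ b := hx.1.trans hx.2
  rw [Real.norm_eq_abs, Real.le_rpow_inv_iff_of_pos (abs_nonneg _) (by positivity) hq]
  exact hconv.le_max_of_mem_Icc (left_mem_Icc.2 hab) (right_mem_Icc.2 hab) hx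

lemma ConvexOn.add_apply_add_sub_le {φ : ℝ → ℝ} {α β x : ℝ} (hφ : ConvexOn ℝ (Icc α β) φ)
    (hx : x ∈ Icc α β) : φ x + φ (α + β - x) ≤ φ α + φ β := by
  have hαβ : α ≤ β := hx.1.trans hx.2
  rcases hαβ.eq_or_lt with rfl | hlt
  · obtain rfl : x = α := le_antisymm hx.2 hx.1
    simp
  set t := (β - x) / (β - α)
  have ht : 0 ≤ t ∧ t ≤ 1 := by
    constructor
    · exact div_nonneg (by linarith [hx.2]) (by linarith)
    · rw [div_le_one (by linarith)]; linarith [hx.1]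
  have hα : α ∈ Icc α β := left_mem_Icc.2 hαβ
  have hβ : β ∈ Icc α β := right_mem_Icc.2 hαβ
  have h₁ := hφ.2 hα hβ ht.1 (sub_nonneg.2 ht.2) (add_sub_cancel t 1)
  have h₂ := hφ.2 hα hβ (sub_nonneg.2 ht.2) ht.1 (sub_add_cancel 1 t)
  have ex₁ : t • α + (1 - t) • β = x := by simp only [t, smul_eq_mul]; field_simp; ring
  have ex₂ : (1 - t) • α + t • β = α + β - x := by simp only [t, smul_eq_mul]; field_simp; ring
  rw [ex₁] at h₁
  rw [ex₂] at h₂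
  simp only [smul_eq_mul] at h₁ h₂
  linarith

lemma ConvexOn.integral_le_mul_add_div_two {φ : ℝ → ℝ} {α β : ℝ} (hαβ : α ≤ β)
    (hφ : ConvexOn ℝ (Icc α β) φ) (hint : IntervalIntegrable φ volume α β) :
    ∫ x in α..β, φ x ≤ (β - α) * ((φ α + φ β) / 2) := by
  have hrefl : ∫ x in α..β, φ (α + β - x) = ∫ x in α..β, φ x := by simp
  have hint' : IntervalIntegrable (fun x => φ (α + β - x)) volume α β := by
    simpa using (hint.comp_sub_left (α + β)).symm
  have hsum : ∫ x in α..β, (φ x + φ (α + β - x)) ≤ ∫ x in α..β, (φ α + φ β) :=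
    integral_mono_on hαβ (hint.add hint') intervalIntegrable_const
      fun x hx => hφ.add_apply_add_sub_le hx
  rw [integral_add hint hint', hrefl, intervalIntegral.integral_const, smul_eq_mul] at hsum
  linarith

lemma integral_abs_sub_rpow {α β x₀ p : ℝ} (hαβ : α ≤ β) (hp : -1 < p) (hx₀ : x₀ = α ∨ x₀ = β) :
    ∫ x in α..β, |x - x₀| ^ p = (β - α) ^ (p + 1) / (p + 1) := by
  have hp₁ : p + 1 ≠ 0 := by linarith
  rcases hx₀ with rfl | rfl
  · rw [integral_congr (g := fun x => (x - x₀) ^ p) fun x hx => by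
      rw [uIcc_of_le hαβ] at hx; simp only [abs_of_nonneg (sub_nonneg.2 hx.1)]]
    simp [integral_comp_sub_right (fun x => x ^ p), integral_rpow (Or.inl hp),
      Real.zero_rpow hp₁]
  · rw [integral_congr (g := fun x => (x₀ - x) ^ p) fun x hx => by
      rw [uIcc_of_le hαβ] at hx; simp only [abs_sub_comm, abs_of_nonneg (sub_nonneg.2 hx.2)]]
    simp [integral_comp_sub_left (fun x => x ^ p), integral_rpow (Or.inl hp),
      Real.zero_rpow hp₁]

lemma abs_integral_mul_le_Lp_mul_Lq {α β p q : ℝ} (hαβ : α ≤ β) (hpq : p.HolderConjugate q)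
    {f g : ℝ → ℝ} (hf : MemLp f (ENNReal.ofReal p) (volume.restrict (Ioc α β)))
    (hg : MemLp g (ENNReal.ofReal q) (volume.restrict (Ioc α β))) :
    |∫ x in α..β, f x * g x| ≤
      (∫ x in α..β, |f x| ^ p) ^ (1 / p) * (∫ x in α..β, |g x| ^ q) ^ (1 / q) := by
  simp only [integral_of_le hαβ]
  calc |∫ x in Ioc α β, f x * g x| ≤ ∫ x in Ioc α β, ‖f x‖ * ‖g x‖ := by
        rw [← Real.norm_eq_abs]
        simpa only [norm_mul] using norm_integral_le_integral_norm (fun x => f x * g x)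
    _ ≤ _ := by simpa only [Real.norm_eq_abs] using integral_mul_norm_le_Lp_mul_Lq hpq hf hg

lemma abs_integral_sub_mul_le_of_convexOn {α β x₀ p q : ℝ} {g : ℝ → ℝ} (hαβ : α ≤ β)
    (hpq : p.HolderConjugate q) (hx₀ : x₀ = α ∨ x₀ = β)
    (hg : MemLp g (ENNReal.ofReal q) (volume.restrict (Icc α β)))
    (hconv : ConvexOn ℝ (Icc α β) fun x => |g x| ^ q) {M : ℝ}
    (hM : (β - α) * ((|g α| ^ q + |g β| ^ q) / 2) ≤ M) :
    |∫ x in α..β, (x - x₀) * g x| ≤ ((β - α) ^ (p + 1) / (p + 1)) ^ (1 / p) * M ^ (1 / q) := by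
  have hp : 0 < p + 1 := by linarith [hpq.pos]
  have hq : 0 < q := hpq.symm.pos
  have hIoc : volume.restrict (Ioc α β) ≤ volume.restrict (Icc α β) :=
    Measure.restrict_mono Ioc_subset_Icc_self le_rfl
  have hw : MemLp (fun x => x - x₀) (ENNReal.ofReal p) (volume.restrict (Icc α β)) :=
    MonotoneOn.memLp_isCompact isCompact_Icc fun x _ y _ hxy => sub_le_sub_right hxy x₀
  have hgq : IntervalIntegrable (fun x => |g x| ^ q) volume α β := by
    rw [intervalIntegrable_iff_integrableOn_Icc_of_le hαβ, IntegrableOn]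
    simpa [hq.le] using hg.integrable_norm_rpow (by simpa using hq) ENNReal.ofReal_ne_top
  refine (abs_integral_mul_le_Lp_mul_Lq hαβ hpq (hw.mono_measure hIoc)
    (hg.mono_measure hIoc)).trans ?_
  rw [integral_abs_sub_rpow hαβ (by linarith) hx₀]
  gcongr
  · exact integral_nonneg hαβ fun x _ => by positivity
  exact (hconv.integral_le_mul_add_div_two hαβ hgq).trans hM

lemma rpow_div_mul_rpow_eq {r p q : ℝ} (hr : 0 < r) (hpq : p.HolderConjugate q) :
    ((r / 2) ^ (p + 1) / (p + 1)) ^ (1 / p) * (r / 8) ^ (1 / q) =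
      r ^ 2 / 16 * (4 / (p + 1)) ^ (1 / p) := by
  have hp : 0 < p := hpq.pos
  have hsplit : (r / 2) ^ (p + 1) / (p + 1) = r / 8 * ((r / 2) ^ p * (4 / (p + 1))) := by
    rw [Real.rpow_add_one (by positivity)]; field_simp; ring
  simp only [one_div]
  rw [hsplit, Real.mul_rpow (by positivity) (by positivity), Real.mul_rpow (by positivity)
    (by positivity), Real.rpow_rpow_inv (by positivity) hp.ne', ← hpq.one_sub_inv,
    Real.rpow_sub (by positivity), Real.rpow_one]
  have : (r / 8) ^ p⁻¹ ≠ 0 := by positivity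
  field_simp
  ring

theorem kirmaci_holder
    (a b c d p q : ℝ) (f f' : ℝ → ℝ) (hab : a < b)
    (hsub : Icc a b ⊆ Ioo c d)
    (hf : ∀ x ∈ Ioo c d, HasDerivAt f (f' x) x)
    (hq : 1 < q) (hpq : 1 / p + 1 / q = 1)
    (hconv : ∀ x ∈ Icc a b, ∀ y ∈ Icc a b, ∀ t ∈ Icc (0:ℝ) 1,
      |f' (t * x + (1 - t) * y)| ^ q ≤ t * |f' x| ^ q + (1 - t) * |f' y| ^ q) :
    |f ((a + b) / 2) - (1 / (b - a)) * ∫ u in a..b, f u| ≤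
      ((b - a) / 16) * (4 / (p + 1)) ^ (1 / p) *
        ((3 * |f' a| ^ q + |f' b| ^ q) ^ (1 / q) +
         (3 * |f' b| ^ q + |f' a| ^ q) ^ (1 / q)) := by
  have hpq' : p.HolderConjugate q :=
    (Real.holderConjugate_iff.2 ⟨hq, by simpa only [one_div, add_comm] using hpq⟩).symm
  have hba : 0 < b - a := sub_pos.2 hab
  have hderiv : ∀ x ∈ Icc a b, HasDerivAt f (f' x) x := fun x hx => hf x (hsub hx)
  have hφ : ConvexOn ℝ (Icc a b) fun x => |f' x| ^ q :=
    ⟨convex_Icc a b, fun x hx y hy s t hs ht hst => by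
      obtain rfl : t = 1 - s := by linarith
      simpa only [smul_eq_mul] using hconv x hx y hy s ⟨hs, by linarith⟩⟩
  have hmem := memLp_of_convexOn_abs_rpow (by linarith)
    (aestronglyMeasurable_of_hasDerivAt measurableSet_Icc hderiv) hφ
  have hmid : |f' ((a + b) / 2)| ^ q ≤ (|f' a| ^ q + |f' b| ^ q) / 2 := by
    convert hconv a (left_mem_Icc.2 hab.le) b (right_mem_Icc.2 hab.le) (1 / 2)
      ⟨by norm_num, by norm_num⟩ using 2 <;> ring_nf
  have hm : (a + b) / 2 ∈ Icc a b := ⟨by linarith, by linarith⟩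
  have hl : Icc a ((a + b) / 2) ⊆ Icc a b := Icc_subset_Icc le_rfl hm.2
  have hr : Icc ((a + b) / 2) b ⊆ Icc a b := Icc_subset_Icc hm.1 le_rfl
  have hleft := abs_integral_sub_mul_le_of_convexOn hm.1 hpq' (Or.inl rfl)
    ((hmem _).mono_measure (Measure.restrict_mono hl le_rfl)) (hφ.subset hl (convex_Icc _ _))
    (M := (b - a) / 8 * (3 * |f' a| ^ q + |f' b| ^ q)) (by nlinarith [hmid])
  have hright := abs_integral_sub_mul_le_of_convexOn hm.2 hpq' (Or.inr rfl)
    ((hmem _).mono_measure (Measure.restrict_mono hr le_rfl)) (hφ.subset hr (convex_Icc _ _))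
    (M := (b - a) / 8 * (3 * |f' b| ^ q + |f' a| ^ q)) (by nlinarith [hmid])
  rw [show (a + b) / 2 - a = (b - a) / 2 by ring] at hleft
  rw [show b - (a + b) / 2 = (b - a) / 2 by ring] at hright
  have hint : IntervalIntegrable f' volume a b :=
    (intervalIntegrable_iff_integrableOn_Icc_of_le hab.le).2 (memLp_one_iff_integrable.1 (hmem 1))
  have hp : 0 < p + 1 := by linarith [hpq'.pos]
  refine (abs_midpoint_sub_average_le hab hderiv hint).trans ?_
  rw [div_le_iff₀ hba]
  refine (add_le_add hleft hright).trans_eq ?_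
  rw [Real.mul_rpow (by positivity) (by positivity), Real.mul_rpow (by positivity) (by positivity),
    ← mul_assoc, ← mul_assoc, rpow_div_mul_rpow_eq hba hpq']
  ring
end

section
/- Let f be differentiable on an open interval containing [a,b] with a < b, q ≥ 1, and |f'|^q convex on [a,b]. Then |f((a+b)/2) - (1/(b-a)) ∫_a^b f(u) du| ≤ (3^{1-1/q}/8)(b-a)(|f'(a)| + |f'(b)|). -/
open MeasureTheory intervalIntegral Set Filter Topology

/-!
Integrating by parts on both halves of `[a, b]` gives, with `m = (a + b) / 2`,
`(b - a) f(m) - ∫ f = ∫_a^m (u - a) f' + ∫_m^b (u - b) f'`.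
Convexity of `|f'|^q` along the chord bounds `|f'(u)|` by `h(u)^(1/q)`, where `h` interpolates
`α = |f'(a)|^q` and `β = |f'(b)|^q` linearly. Jensen's inequality for the concave `x ↦ x^(1/q)`,
with the weight `u - a` of mass `(b - a)^2 / 8`, bounds the left half by
`(b - a)^2 / 8 · ((2α + β) / 3)^(1/q)`, and the right half symmetrically. Finally
`(2α + β)^(1/q) ≤ 2 |f'(a)| + |f'(b)|` by subadditivity of `x ↦ x^(1/q)`.
-/

theorem integrableOn_Icc_of_hasDerivAt_of_abs_le {f f' k : ℝ → ℝ} {a b : ℝ}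
    (hf : ∀ x ∈ Icc a b, HasDerivAt f (f' x) x) (hk : IntegrableOn k (Icc a b))
    (hbound : ∀ x ∈ Icc a b, |f' x| ≤ k x) : IntegrableOn f' (Icc a b) := by
  have hderiv : f' =ᵐ[volume.restrict (Icc a b)] deriv f :=
    ae_restrict_of_forall_mem measurableSet_Icc fun x hx ↦ (hf x hx).deriv.symm
  exact hk.mono' ((measurable_deriv f).aestronglyMeasurable.congr hderiv.symm)
    (ae_restrict_of_forall_mem measurableSet_Icc hbound)

theorem mul_sub_integral_eq_integral_sub_mul_deriv {f f' : ℝ → ℝ} {a b m : ℝ}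
    (hm : m ∈ uIcc a b) (hf : ∀ x ∈ uIcc a b, HasDerivAt f (f' x) x)
    (hf' : IntervalIntegrable f' volume a b) :
    (b - a) * f m - ∫ u in a..b, f u =
      (∫ u in a..m, (u - a) * f' u) + ∫ u in m..b, (u - b) * f' u := by
  have ham := uIcc_subset_uIcc_left hm
  have hmb := uIcc_subset_uIcc_right hm
  have hfc : ContinuousOn f (uIcc a b) := fun x hx ↦ (hf x hx).continuousAt.continuousWithinAt
  have hsub : ∀ c x : ℝ, HasDerivAt (fun u ↦ u - c) 1 x := fun c x ↦
    (hasDerivAt_id x).sub_const c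
  have hleft := integral_mul_deriv_eq_deriv_mul (fun x _ ↦ hsub a x) (fun x hx ↦ hf x (ham hx))
    intervalIntegrable_const (hf'.mono_set ham)
  have hright := integral_mul_deriv_eq_deriv_mul (fun x _ ↦ hsub b x) (fun x hx ↦ hf x (hmb hx))
    intervalIntegrable_const (hf'.mono_set hmb)
  rw [hleft, hright, ← integral_add_adjacent_intervals (hfc.mono ham).intervalIntegrable
    (hfc.mono hmb).intervalIntegrable]
  simp only [one_mul, sub_self, zero_mul]
  ring

theorem abs_le_rpow_chord_of_convex {g : ℝ → ℝ} {a b q : ℝ} (hab : a < b) (hq : 0 < q)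
    (hconv : ∀ t ∈ Icc (0:ℝ) 1,
      |g (t * a + (1 - t) * b)| ^ q ≤ t * |g a| ^ q + (1 - t) * |g b| ^ q)
    {u : ℝ} (hu : u ∈ Icc a b) :
    |g u| ≤ (((b - u) * |g a| ^ q + (u - a) * |g b| ^ q) / (b - a)) ^ (1 / q) := by
  have hba : b - a ≠ 0 := (sub_pos.2 hab).ne'
  set t := (b - u) / (b - a)
  have ht : t ∈ Icc (0:ℝ) 1 := by
    constructor
    · exact div_nonneg (by linarith [hu.2]) (by linarith)
    · rw [div_le_one (by linarith)]; linarith [hu.1]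
  have hpoint : t * a + (1 - t) * b = u := by simp only [t]; field_simp; ring
  have hweights : t * |g a| ^ q + (1 - t) * |g b| ^ q =
      ((b - u) * |g a| ^ q + (u - a) * |g b| ^ q) / (b - a) := by
    simp only [t]; field_simp; ring
  rw [← Real.rpow_rpow_inv (abs_nonneg (g u)) hq.ne', one_div]
  gcongr
  rw [← hweights, ← hpoint]
  exact hconv t ht


theorem rpow_le_tangent_line {x c r : ℝ} (hx : 0 ≤ x) (hc : 0 < c) (hr₀ : 0 ≤ r) (hr₁ : r ≤ 1) :
    x ^ r ≤ c ^ (r - 1) * r * x + (1 - r) * c ^ r := by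
  have amgm := Real.geom_mean_le_arith_mean2_weighted hr₀ (sub_nonneg.2 hr₁) hx hc.le
    (add_sub_cancel r 1)
  have hc₁ : c ^ (r - 1) * c ^ (1 - r) = 1 := by rw [← Real.rpow_add hc]; simp
  have hc₂ : c ^ (r - 1) * c = c ^ r := by rw [Real.rpow_sub_one hc.ne']; field_simp
  calc x ^ r = c ^ (r - 1) * (x ^ r * c ^ (1 - r)) := by rw [mul_left_comm, hc₁, mul_one]
    _ ≤ c ^ (r - 1) * (r * x + (1 - r) * c) := by gcongr
    _ = _ := by rw [← hc₂]; ring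

theorem integral_mul_rpow_le {w h : ℝ → ℝ} {a b r : ℝ} (hab : a ≤ b) (hr₀ : 0 < r) (hr₁ : r ≤ 1)
    (hwc : ContinuousOn w (Icc a b)) (hhc : ContinuousOn h (Icc a b))
    (hw : ∀ u ∈ Icc a b, 0 ≤ w u) (hh : ∀ u ∈ Icc a b, 0 ≤ h u)
    (hW : 0 < ∫ u in a..b, w u) :
    ∫ u in a..b, w u * h u ^ r ≤
      (∫ u in a..b, w u) * ((∫ u in a..b, w u * h u) / ∫ u in a..b, w u) ^ r := by
  set W := ∫ u in a..b, w u
  set H := ∫ u in a..b, w u * h u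
  rw [← uIcc_of_le hab] at hwc hhc
  have hH : 0 ≤ H := integral_nonneg hab fun u hu ↦ mul_nonneg (hw u hu) (hh u hu)
  have tangent : ∀ c > 0,
      ∫ u in a..b, w u * h u ^ r ≤ c ^ (r - 1) * r * H + (1 - r) * c ^ r * W := by
    intro c hc
    calc ∫ u in a..b, w u * h u ^ r
        ≤ ∫ u in a..b, c ^ (r - 1) * r * (w u * h u) + (1 - r) * c ^ r * w u := by
          refine integral_mono_on hab ?_ ?_ fun u hu ↦ ?_
          · exact (hwc.mul (hhc.rpow_const fun _ _ ↦ Or.inr hr₀.le)).intervalIntegrable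
          · exact (((hwc.mul hhc).intervalIntegrable).const_mul _).add
              (hwc.intervalIntegrable.const_mul _)
          have := rpow_le_tangent_line (hh u hu) hc hr₀.le hr₁
          nlinarith [hw u hu]
      _ = c ^ (r - 1) * r * H + (1 - r) * c ^ r * W := by
          rw [intervalIntegral.integral_add, intervalIntegral.integral_const_mul,
            intervalIntegral.integral_const_mul]
          · exact ((hwc.mul hhc).intervalIntegrable).const_mul _
          · exact hwc.intervalIntegrable.const_mul _
  rcases hH.eq_or_lt with hH0 | hHpos
  -- for `H = 0` the optimal tangent point `c = 0` is only reached in the limit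
  · rw [← hH0, zero_div, Real.zero_rpow hr₀.ne', mul_zero]
    have hlim : Tendsto (fun c : ℝ ↦ (1 - r) * c ^ r * W) (𝓝[>] 0) (𝓝 0) := by
      have := (((Real.continuous_rpow_const hr₀.le).tendsto 0).const_mul (1 - r)).mul_const W
      rw [Real.zero_rpow hr₀.ne', mul_zero, zero_mul] at this
      exact this.mono_left nhdsWithin_le_nhds
    refine ge_of_tendsto hlim (eventually_nhdsWithin_of_forall fun c hc ↦ ?_)
    simpa [← hH0] using tangent c hc
  · calc _ ≤ (H / W) ^ (r - 1) * r * H + (1 - r) * (H / W) ^ r * W := tangent _ (by positivity)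
      _ = W * (H / W) ^ r := by
        rw [Real.rpow_sub_one (by positivity)]
        field_simp
        ring

theorem abs_integral_sub_mul_le_of_abs_le_rpow {g : ℝ → ℝ} {a b α β r : ℝ} (hab : a < b)
    (hα : 0 ≤ α) (hβ : 0 ≤ β) (hr₀ : 0 < r) (hr₁ : r ≤ 1)
    (hg : IntervalIntegrable g volume a ((a + b) / 2))
    (hbound : ∀ u ∈ Icc a ((a + b) / 2), |g u| ≤ (((b - u) * α + (u - a) * β) / (b - a)) ^ r) :
    |∫ u in a..(a + b) / 2, (u - a) * g u| ≤ (b - a) ^ 2 / 8 * ((2 * α + β) / 3) ^ r := by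
  have hba : b - a ≠ 0 := (sub_pos.2 hab).ne'
  have ham : a ≤ (a + b) / 2 := by linarith
  have hW : ∫ u in a..(a + b) / 2, (u - a) = (b - a) ^ 2 / 8 := by
    rw [intervalIntegral.integral_comp_sub_right fun u ↦ u, integral_id]
    ring
  have hH : ∫ u in a..(a + b) / 2, (u - a) * (((b - u) * α + (u - a) * β) / (b - a)) =
      (b - a) ^ 2 / 8 * ((2 * α + β) / 3) := by
    have hpoly : ∀ u, (u - a) * (((b - u) * α + (u - a) * β) / (b - a)) =
        α * (u - a) + (β - α) / (b - a) * (u - a) ^ 2 := by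
      intro u; field_simp; ring
    simp_rw [hpoly]
    rw [intervalIntegral.integral_add, intervalIntegral.integral_const_mul,
      intervalIntegral.integral_const_mul, intervalIntegral.integral_comp_sub_right fun u ↦ u,
      intervalIntegral.integral_comp_sub_right fun u ↦ u ^ 2]
    · simp only [sub_self, integral_id, integral_pow]
      field_simp
      ring
    all_goals exact Continuous.intervalIntegrable (by fun_prop) _ _
  calc |∫ u in a..(a + b) / 2, (u - a) * g u|
      ≤ ∫ u in a..(a + b) / 2, (u - a) * (((b - u) * α + (u - a) * β) / (b - a)) ^ r := by
        refine (abs_integral_le_integral_abs ham).trans (integral_mono_on ham ?_ ?_ fun u hu ↦ ?_)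
        · exact (hg.continuousOn_mul (by fun_prop)).abs
        · have hchord : Continuous fun u ↦ ((b - u) * α + (u - a) * β) / (b - a) := by fun_prop
          exact ((continuous_sub_right a).mul
            (hchord.rpow_const fun _ ↦ Or.inr hr₀.le)).intervalIntegrable _ _
        rw [abs_mul, abs_of_nonneg (by linarith [hu.1])]
        exact mul_le_mul_of_nonneg_left (hbound u hu) (by linarith [hu.1])
    _ ≤ (b - a) ^ 2 / 8 * ((b - a) ^ 2 / 8 * ((2 * α + β) / 3) / ((b - a) ^ 2 / 8)) ^ r := by
        rw [← hH, ← hW]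
        refine integral_mul_rpow_le ham hr₀ hr₁ (by fun_prop) (by fun_prop)
          (fun u hu ↦ by linarith [hu.1]) (fun u hu ↦ ?_) (by rw [hW]; positivity)
        have : u ≤ b := by linarith [hu.2]
        exact div_nonneg (by nlinarith [hu.1]) (by linarith)
    _ = (b - a) ^ 2 / 8 * ((2 * α + β) / 3) ^ r := by
        rw [mul_div_cancel_left₀ _ (by positivity)]

theorem abs_integral_sub_mul_add_le_of_abs_le_rpow {g : ℝ → ℝ} {a b α β r : ℝ} (hab : a < b)
    (hα : 0 ≤ α) (hβ : 0 ≤ β) (hr₀ : 0 < r) (hr₁ : r ≤ 1) (hg : IntervalIntegrable g volume a b)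
    (hbound : ∀ u ∈ Icc a b, |g u| ≤ (((b - u) * α + (u - a) * β) / (b - a)) ^ r) :
    |(∫ u in a..(a + b) / 2, (u - a) * g u) + ∫ u in (a + b) / 2..b, (u - b) * g u| ≤
      (b - a) ^ 2 / 8 * (((2 * α + β) / 3) ^ r + ((α + 2 * β) / 3) ^ r) := by
  have hm : (a + b) / 2 ∈ Icc a b := ⟨by linarith, by linarith⟩
  have hleft : Icc a ((a + b) / 2) ⊆ Icc a b := Icc_subset_Icc le_rfl hm.2
  have hleft' : uIcc a ((a + b) / 2) ⊆ uIcc a b :=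
    uIcc_subset_uIcc_left (by rwa [uIcc_of_le hab.le])
  -- the reflection `u ↦ a + b - u` carries the right half onto the left one, swapping `α` and `β`
  have hreflect : ∫ u in (a + b) / 2..b, (u - b) * g u =
      -∫ u in a..(a + b) / 2, (u - a) * g (a + b - u) := by
    have := intervalIntegral.integral_comp_sub_left (fun u ↦ (u - b) * g u) (a + b)
      (a := a) (b := (a + b) / 2)
    rw [show a + b - (a + b) / 2 = (a + b) / 2 by ring, add_sub_cancel_left] at this
    rw [← this, ← intervalIntegral.integral_neg]
    congr 1 with u
    ring
  have hg' : IntervalIntegrable (fun u ↦ g (a + b - u)) volume a ((a + b) / 2) := by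
    have := hg.comp_sub_left (a + b)
    rw [add_sub_cancel_right, add_sub_cancel_left] at this
    exact this.symm.mono_set hleft'
  have hbound' : ∀ u ∈ Icc a ((a + b) / 2),
      |g (a + b - u)| ≤ (((b - u) * β + (u - a) * α) / (b - a)) ^ r := by
    intro u hu
    convert hbound (a + b - u) ⟨by linarith [hu.2], by linarith [hu.1]⟩ using 3
    ring
  calc _ ≤ |∫ u in a..(a + b) / 2, (u - a) * g u| + |∫ u in (a + b) / 2..b, (u - b) * g u| :=
        abs_add_le _ _
    _ ≤ (b - a) ^ 2 / 8 * ((2 * α + β) / 3) ^ r + (b - a) ^ 2 / 8 * ((2 * β + α) / 3) ^ r := by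
        rw [hreflect, abs_neg]
        exact add_le_add
          (abs_integral_sub_mul_le_of_abs_le_rpow hab hα hβ hr₀ hr₁ (hg.mono_set hleft')
            fun u hu ↦ hbound u (hleft hu))
          (abs_integral_sub_mul_le_of_abs_le_rpow hab hβ hα hr₀ hr₁ hg' hbound')
    _ = _ := by rw [← mul_add, add_comm (2 * β)]

theorem rpow_add_rpow_le_three_rpow_mul {α β r : ℝ} (hα : 0 ≤ α) (hβ : 0 ≤ β) (hr₀ : 0 ≤ r)
    (hr₁ : r ≤ 1) :
    ((2 * α + β) / 3) ^ r + ((α + 2 * β) / 3) ^ r ≤ (3:ℝ) ^ (1 - r) * (α ^ r + β ^ r) := by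
  have htwo : (2:ℝ) ^ r ≤ 2 := by
    simpa using Real.rpow_le_rpow_of_exponent_le (by norm_num : (1:ℝ) ≤ 2) hr₁
  have hsubadd : ∀ x y : ℝ, 0 ≤ x → 0 ≤ y → ((2 * x + y) / 3) ^ r ≤ (2 * x ^ r + y ^ r) / 3 ^ r := by
    intro x y hx hy
    rw [Real.div_rpow (by positivity) (by norm_num)]
    gcongr
    calc (2 * x + y) ^ r ≤ (2 * x) ^ r + y ^ r :=
          Real.rpow_add_le_add_rpow (by positivity) hy hr₀ hr₁
      _ ≤ 2 * x ^ r + y ^ r := by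
        rw [Real.mul_rpow (by norm_num) hx]
        gcongr
  calc _ ≤ (2 * α ^ r + β ^ r) / 3 ^ r + (2 * β ^ r + α ^ r) / 3 ^ r := by
        rw [add_comm α]
        exact add_le_add (hsubadd α β hα hβ) (hsubadd β α hβ hα)
    _ = (3:ℝ) ^ (1 - r) * (α ^ r + β ^ r) := by
        rw [Real.rpow_sub (by norm_num), Real.rpow_one]
        ring

theorem kirmaci_power_mean
    (a b c d q : ℝ) (f f' : ℝ → ℝ) (hab : a < b)
    (hsub : Icc a b ⊆ Ioo c d)
    (hf : ∀ x ∈ Ioo c d, HasDerivAt f (f' x) x)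
    (hq : 1 ≤ q)
    (hconv : ∀ x ∈ Icc a b, ∀ y ∈ Icc a b, ∀ t ∈ Icc (0:ℝ) 1,
      |f' (t * x + (1 - t) * y)| ^ q ≤ t * |f' x| ^ q + (1 - t) * |f' y| ^ q) :
    |f ((a + b) / 2) - (1 / (b - a)) * ∫ u in a..b, f u| ≤
      ((3:ℝ) ^ (1 - 1 / q) / 8) * (b - a) * (|f' a| + |f' b|) := by
  have hq₀ : 0 < q := one_pos.trans_le hq
  have hr₁ : 1 / q ≤ 1 := (div_le_one hq₀).2 hq
  have hderiv : ∀ x ∈ Icc a b, HasDerivAt f (f' x) x := fun x hx ↦ hf x (hsub hx)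
  set A := |f' a|
  set B := |f' b|
  have hbound : ∀ u ∈ Icc a b, |f' u| ≤ (((b - u) * A ^ q + (u - a) * B ^ q) / (b - a)) ^ (1 / q) :=
    fun u ↦ abs_le_rpow_chord_of_convex hab hq₀
      (hconv a (left_mem_Icc.2 hab.le) b (right_mem_Icc.2 hab.le))
  have hf' : IntervalIntegrable f' volume a b := by
    refine (intervalIntegrable_iff_integrableOn_Icc_of_le hab.le).2
      (integrableOn_Icc_of_hasDerivAt_of_abs_le hderiv (ContinuousOn.integrableOn_Icc ?_) hbound)
    exact (Continuous.rpow_const (by fun_prop) fun _ ↦ Or.inr (by positivity)).continuousOn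
  have hpow : ∀ x : ℝ, 0 ≤ x → (x ^ q) ^ (1 / q) = x := fun x hx ↦ by
    rw [one_div, Real.rpow_rpow_inv hx hq₀.ne']
  have hba : 0 < b - a := sub_pos.2 hab
  rw [show f ((a + b) / 2) - 1 / (b - a) * ∫ u in a..b, f u =
      1 / (b - a) * ((b - a) * f ((a + b) / 2) - ∫ u in a..b, f u) by field_simp,
    mul_sub_integral_eq_integral_sub_mul_deriv (by rw [uIcc_of_le hab.le]; constructor <;> linarith)
      (by rwa [uIcc_of_le hab.le]) hf',
    abs_mul, abs_of_pos (by positivity)]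
  calc _ ≤ 1 / (b - a) * ((b - a) ^ 2 / 8 *
        (((2 * A ^ q + B ^ q) / 3) ^ (1 / q) + ((A ^ q + 2 * B ^ q) / 3) ^ (1 / q))) := by
        gcongr
        exact abs_integral_sub_mul_add_le_of_abs_le_rpow hab (by positivity) (by positivity)
          (by positivity) hr₁ hf' hbound
    _ ≤ 1 / (b - a) * ((b - a) ^ 2 / 8 * ((3:ℝ) ^ (1 - 1 / q) * (A + B))) := by
        gcongr
        have := rpow_add_rpow_le_three_rpow_mul (by positivity : 0 ≤ A ^ q)
          (by positivity : 0 ≤ B ^ q) (by positivity) hr₁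
        rwa [hpow A (abs_nonneg _), hpow B (abs_nonneg _)] at this
    _ = _ := by field_simp
end

section
/- Let A ⊆ ℝⁿ be invex w.r.t. η satisfying Condition C. Then for all x, y ∈ A and t₁, t₂ ∈ [0,1], η(y + t₂ η(x,y), y + t₁ η(x,y)) = (t₂ - t₁) η(x,y). -/
/-!
Write `v = η x y` and `z = y + t₂ • v`. Condition C computes `η a z` as a multiple `c • v` for
both anchors `a = y` (`c = -t₂`) and `a = x` (`c = 1 - t₂`). Applying the first identity of
Condition C to the pair `(a, z)` then gives `η z (z + μ • v) = -μ • v` for every `μ` between `0`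
and `c`; together the two anchors cover every `μ = t₁ - t₂` with `t₁ ∈ [0, 1]`.
-/

open Set

theorem eta_add_smul_of_mem_uIcc {E : Type*} [AddCommGroup E] [Module ℝ E] {A : Set E}
    {η : E → E → E}
    (hC : ∀ x ∈ A, ∀ y ∈ A, ∀ t ∈ Icc (0:ℝ) 1, η y (y + t • η x y) = (-t) • η x y)
    {a z v : E} {c μ : ℝ} (ha : a ∈ A) (hz : z ∈ A) (hη : η a z = c • v) (hμ : μ ∈ uIcc 0 c) :
    η z (z + μ • v) = (-μ) • v := by
  rw [← segment_eq_uIcc] at hμ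
  obtain ⟨r, s, hr, hs, hrs, rfl⟩ := hμ
  have hs₁ : s ∈ Icc (0:ℝ) 1 := ⟨hs, by linarith⟩
  simpa only [hη, smul_smul, smul_zero, mul_zero, zero_add, smul_eq_mul, neg_mul]
    using hC a ha z hz s hs₁

theorem condC_general
    (n : ℕ) (A : Set (Fin n → ℝ)) (η : (Fin n → ℝ) → (Fin n → ℝ) → (Fin n → ℝ))
    (hinv : ∀ x ∈ A, ∀ y ∈ A, ∀ t ∈ Icc (0:ℝ) 1, x + t • η y x ∈ A)
    (hC : ∀ x ∈ A, ∀ y ∈ A, ∀ t ∈ Icc (0:ℝ) 1,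
      η y (y + t • η x y) = (-t) • η x y ∧ η x (y + t • η x y) = (1 - t) • η x y) :
    ∀ x ∈ A, ∀ y ∈ A, ∀ t₁ ∈ Icc (0:ℝ) 1, ∀ t₂ ∈ Icc (0:ℝ) 1,
      η (y + t₂ • η x y) (y + t₁ • η x y) = (t₂ - t₁) • η x y := by
  intro x hx y hy t₁ ht₁ t₂ ht₂
  have hC₁ := fun x hx y hy t ht ↦ (hC x hx y hy t ht).1
  have hz := hinv y hy x hx t₂ ht₂
  have hsplit : y + t₁ • η x y = (y + t₂ • η x y) + (t₁ - t₂) • η x y := by module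
  rcases le_total t₁ t₂ with h | h
  · rw [hsplit, eta_add_smul_of_mem_uIcc hC₁ hy hz (hC x hx y hy t₂ ht₂).1, neg_sub]
    exact mem_uIcc.2 (Or.inr ⟨by linarith [ht₁.1], by linarith⟩)
  · rw [hsplit, eta_add_smul_of_mem_uIcc hC₁ hx hz (hC x hx y hy t₂ ht₂).2, neg_sub]
    exact mem_uIcc.2 (Or.inl ⟨by linarith, by linarith [ht₁.2]⟩)
end
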